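/- arXiv:1411.2302 — 8 statements merged into one kernel-verified Lean document; each statement's English description precedes it below -/
import Mathlib

section
/- Let n ≥ 1 and let ι be a fixed-point-free involution of {1,…,2n}. Then l(ι) = n + 2·c(ι) + 4·r(ι), where l is the number of inversions, c(ι) is the number of crossing pairs of arcs of ι, and r(ι) is the number of nesting pairs of arcs of ι. -/
/-- A fixed-point-free involution. -/
def isFPF {m : ℕ} (ι : Equiv.Perm (Fin m)) : Prop :=
  ι * ι = 1 ∧ ∀ i, ι i ≠ i

/-- The length (number of inversions) of a permutation of `Fin m`. -/
def invLength {m : ℕ} (π : Equiv.Perm (Fin m)) : ℕ :=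
  Finset.card (Finset.univ.filter fun p : Fin m × Fin m => p.1 < p.2 ∧ π p.2 < π p.1)

/-- The number of crossing pairs of arcs `a < b < ι a < ι b` of a fixed-point-free
involution (the number of countryside involutions contained in it). -/
def crossings {m : ℕ} (ι : Equiv.Perm (Fin m)) : ℕ :=
  Finset.card (Finset.univ.filter fun p : Fin m × Fin m =>
    p.1 < p.2 ∧ p.2 < ι p.1 ∧ ι p.1 < ι p.2)

/-- The number of nesting pairs of arcs `a < b < ι b < ι a` of a fixed-point-free
involution (the number of rainbow involutions contained in it). -/
def nestings {m : ℕ} (ι : Equiv.Perm (Fin m)) : ℕ :=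
  Finset.card (Finset.univ.filter fun p : Fin m × Fin m =>
    p.1 < p.2 ∧ p.2 < ι p.2 ∧ ι p.2 < ι p.1)

/-- for a fixed-point-free involution `ι` of `{1,…,2n}` (`n ≥ 1`),
`l(ι) = n + 2·c(ι) + 4·r(ι)`. -/
theorem length_of_fpf_involution {n : ℕ} (hn : 1 ≤ n)
    (ι : Equiv.Perm (Fin (2*n))) (hι : isFPF ι) :
    invLength ι = n + 2 * crossings ι + 4 * nestings ι := by
  obtain ⟨hmul, hfp⟩ := hι
  have h2 : ∀ x, ι (ι x) = x := by
    intro x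
    have : (ι * ι) x = (1 : Equiv.Perm (Fin (2*n))) x := by rw [hmul]
    simpa [Equiv.Perm.mul_apply] using this
  classical
  unfold invLength crossings nestings
  set C : Finset (Fin (2*n) × Fin (2*n)) :=
    Finset.univ.filter fun p => p.1 < p.2 ∧ p.2 < ι p.1 ∧ ι p.1 < ι p.2 with hCdef
  set R : Finset (Fin (2*n) × Fin (2*n)) :=
    Finset.univ.filter fun p => p.1 < p.2 ∧ p.2 < ι p.2 ∧ ι p.2 < ι p.1 with hRdef
  set L : Finset (Fin (2*n)) := Finset.univ.filter fun a => a < ι a with hLdef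
  set A := L.image fun a => (a, ι a) with hAdef
  set B1 := C.image fun p => (p.1, ι p.2) with hB1def
  set B2 := C.image fun p => (p.2, ι p.1) with hB2def
  set D2 := R.image fun p => (p.1, ι p.2) with hD2def
  set D3 := R.image fun p => (p.2, ι p.1) with hD3def
  set D4 := R.image fun p => (ι p.2, ι p.1) with hD4def
  -- closed-form membership lemmas
  have memA : ∀ i j : Fin (2*n), (i, j) ∈ A ↔ (i < ι i ∧ ι i = j) := by
    intro i j
    simp only [hAdef, Finset.mem_image, hLdef, Finset.mem_filter, Finset.mem_univ, true_and,
      Prod.mk.injEq]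
    constructor
    · rintro ⟨a, ha, rfl, rfl⟩; exact ⟨ha, rfl⟩
    · rintro ⟨h1, h2'⟩; exact ⟨i, h1, rfl, h2'⟩
  have memB1 : ∀ i j : Fin (2*n), (i, j) ∈ B1 ↔ (i < ι j ∧ ι j < ι i ∧ ι i < j) := by
    intro i j
    simp only [hB1def, Finset.mem_image, hCdef, Finset.mem_filter, Finset.mem_univ, true_and,
      Prod.mk.injEq]
    constructor
    · rintro ⟨⟨a, b⟩, hc, rfl, rfl⟩
      simpa [h2] using hc
    · rintro ⟨h1', h2', h3'⟩
      exact ⟨(i, ι j), by simp [h2]; exact ⟨h1', h2', h3'⟩, rfl, h2 j⟩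
  have memB2 : ∀ i j : Fin (2*n), (i, j) ∈ B2 ↔ (ι j < i ∧ i < j ∧ j < ι i) := by
    intro i j
    simp only [hB2def, Finset.mem_image, hCdef, Finset.mem_filter, Finset.mem_univ, true_and,
      Prod.mk.injEq]
    constructor
    · rintro ⟨⟨a, b⟩, hc, rfl, rfl⟩
      simpa [h2] using hc
    · rintro ⟨h1', h2', h3'⟩
      exact ⟨(ι j, i), by simp [h2]; exact ⟨h1', h2', h3'⟩, rfl, h2 j⟩
  have memR : ∀ i j : Fin (2*n), (i, j) ∈ R ↔ (i < j ∧ j < ι j ∧ ι j < ι i) := by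
    intro i j
    simp only [hRdef, Finset.mem_filter, Finset.mem_univ, true_and]
  have memD2 : ∀ i j : Fin (2*n), (i, j) ∈ D2 ↔ (i < ι j ∧ ι j < j ∧ j < ι i) := by
    intro i j
    simp only [hD2def, Finset.mem_image, hRdef, Finset.mem_filter, Finset.mem_univ, true_and,
      Prod.mk.injEq]
    constructor
    · rintro ⟨⟨a, b⟩, hc, rfl, rfl⟩
      simpa [h2] using hc
    · rintro ⟨h1', h2', h3'⟩
      exact ⟨(i, ι j), by simp [h2]; exact ⟨h1', h2', h3'⟩, rfl, h2 j⟩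
  have memD3 : ∀ i j : Fin (2*n), (i, j) ∈ D3 ↔ (ι j < i ∧ i < ι i ∧ ι i < j) := by
    intro i j
    simp only [hD3def, Finset.mem_image, hRdef, Finset.mem_filter, Finset.mem_univ, true_and,
      Prod.mk.injEq]
    constructor
    · rintro ⟨⟨a, b⟩, hc, rfl, rfl⟩
      simpa [h2] using hc
    · rintro ⟨h1', h2', h3'⟩
      exact ⟨(ι j, i), by simp [h2]; exact ⟨h1', h2', h3'⟩, rfl, h2 j⟩
  have memD4 : ∀ i j : Fin (2*n), (i, j) ∈ D4 ↔ (ι j < ι i ∧ ι i < i ∧ i < j) := by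
    intro i j
    simp only [hD4def, Finset.mem_image, hRdef, Finset.mem_filter, Finset.mem_univ, true_and,
      Prod.mk.injEq]
    constructor
    · rintro ⟨⟨a, b⟩, hc, rfl, rfl⟩
      simpa [h2] using hc
    · rintro ⟨h1', h2', h3'⟩
      exact ⟨(ι j, ι i), by simp [h2]; exact ⟨h1', h2', h3'⟩, h2 i, h2 j⟩
  -- key facts for omega
  have e3 : ∀ i j : Fin (2*n), ι i = j ↔ ι j = i := by
    intro i j
    constructor
    · rintro rfl; exact h2 i
    · rintro rfl; exact h2 j
  -- the decomposition of the inversion set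
  have key : (Finset.univ.filter fun p : Fin (2*n) × Fin (2*n) => p.1 < p.2 ∧ ι p.2 < ι p.1)
      = A ∪ (B1 ∪ (B2 ∪ (R ∪ (D2 ∪ (D3 ∪ D4))))) := by
    ext ⟨i, j⟩
    simp only [Finset.mem_filter, Finset.mem_univ, true_and, Finset.mem_union,
      memA, memB1, memB2, memR, memD2, memD3, memD4]
    have f1 : ι i ≠ i := hfp i
    have f2 : ι j ≠ j := hfp j
    have f3 : ι i = j ↔ ι j = i := e3 i j
    simp only [Fin.lt_def, Fin.ext_iff, Ne] at f1 f2 f3 ⊢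
    omega
  -- disjointness
  have disj1 : Disjoint A (B1 ∪ (B2 ∪ (R ∪ (D2 ∪ (D3 ∪ D4))))) := by
    rw [Finset.disjoint_left]
    rintro ⟨i, j⟩ hp hq
    rw [memA] at hp
    simp only [Finset.mem_union, memB1, memB2, memR, memD2, memD3, memD4] at hq
    simp only [Fin.lt_def, Fin.ext_iff] at hp hq
    omega
  have disj2 : Disjoint B1 (B2 ∪ (R ∪ (D2 ∪ (D3 ∪ D4)))) := by
    rw [Finset.disjoint_left]
    rintro ⟨i, j⟩ hp hq
    rw [memB1] at hp
    simp only [Finset.mem_union, memB2, memR, memD2, memD3, memD4] at hq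
    simp only [Fin.lt_def, Fin.ext_iff] at hp hq
    omega
  have disj3 : Disjoint B2 (R ∪ (D2 ∪ (D3 ∪ D4))) := by
    rw [Finset.disjoint_left]
    rintro ⟨i, j⟩ hp hq
    rw [memB2] at hp
    simp only [Finset.mem_union, memR, memD2, memD3, memD4] at hq
    simp only [Fin.lt_def, Fin.ext_iff] at hp hq
    omega
  have disj4 : Disjoint R (D2 ∪ (D3 ∪ D4)) := by
    rw [Finset.disjoint_left]
    rintro ⟨i, j⟩ hp hq
    rw [memR] at hp
    simp only [Finset.mem_union, memD2, memD3, memD4] at hq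
    simp only [Fin.lt_def, Fin.ext_iff] at hp hq
    omega
  have disj5 : Disjoint D2 (D3 ∪ D4) := by
    rw [Finset.disjoint_left]
    rintro ⟨i, j⟩ hp hq
    rw [memD2] at hp
    simp only [Finset.mem_union, memD3, memD4] at hq
    simp only [Fin.lt_def, Fin.ext_iff] at hp hq
    omega
  have disj6 : Disjoint D3 D4 := by
    rw [Finset.disjoint_left]
    rintro ⟨i, j⟩ hp hq
    rw [memD3] at hp
    rw [memD4] at hq
    simp only [Fin.lt_def, Fin.ext_iff] at hp hq
    omega
  -- cardinalities of the pieces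
  have injA : Function.Injective fun a : Fin (2*n) => (a, ι a) := by
    intro a b h
    exact (Prod.mk.injEq _ _ _ _ ▸ h : _ ∧ _).1
  have inj1 : Function.Injective fun p : Fin (2*n) × Fin (2*n) => (p.1, ι p.2) := by
    intro p q h
    simp only [Prod.mk.injEq] at h
    exact Prod.ext h.1 (ι.injective h.2)
  have inj2 : Function.Injective fun p : Fin (2*n) × Fin (2*n) => (p.2, ι p.1) := by
    intro p q h
    simp only [Prod.mk.injEq] at h
    exact Prod.ext (ι.injective h.2) h.1
  have inj3 : Function.Injective fun p : Fin (2*n) × Fin (2*n) => (ι p.2, ι p.1) := by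
    intro p q h
    simp only [Prod.mk.injEq] at h
    exact Prod.ext (ι.injective h.2) (ι.injective h.1)
  have cA : A.card = L.card := Finset.card_image_of_injective _ injA
  have cB1 : B1.card = C.card := Finset.card_image_of_injective _ inj1
  have cB2 : B2.card = C.card := Finset.card_image_of_injective _ inj2
  have cD2 : D2.card = R.card := Finset.card_image_of_injective _ inj1
  have cD3 : D3.card = R.card := Finset.card_image_of_injective _ inj2
  have cD4 : D4.card = R.card := Finset.card_image_of_injective _ inj3
  have cL : L.card = n := by
    have h1 : L.card + (Finset.univ.filter fun a : Fin (2*n) => ¬ a < ι a).card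
        = Finset.card (Finset.univ : Finset (Fin (2*n))) :=
      Finset.card_filter_add_card_filter_not _
    have h3 : (Finset.univ.filter fun a : Fin (2*n) => ¬ a < ι a).card = L.card := by
      apply Finset.card_bij (fun a _ => ι a)
      · intro a ha
        simp only [Finset.mem_filter, Finset.mem_univ, true_and, not_lt] at ha
        simp only [hLdef, Finset.mem_filter, Finset.mem_univ, true_and, h2]
        exact lt_of_le_of_ne ha (hfp a)
      · intro a _ b _ h
        exact ι.injective h
      · intro b hb
        simp only [hLdef, Finset.mem_filter, Finset.mem_univ, true_and] at hb
        refine ⟨ι b, ?_, h2 b⟩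
        simp only [Finset.mem_filter, Finset.mem_univ, true_and, not_lt, h2]
        exact le_of_lt hb
    have h4 : Finset.card (Finset.univ : Finset (Fin (2*n))) = 2 * n := by
      simp
    omega
  rw [key, Finset.card_union_of_disjoint disj1, Finset.card_union_of_disjoint disj2,
    Finset.card_union_of_disjoint disj3, Finset.card_union_of_disjoint disj4,
    Finset.card_union_of_disjoint disj5, Finset.card_union_of_disjoint disj6,
    cA, cB1, cB2, cD2, cD3, cD4, cL]
  ring
end

section
/- Let n ≥ 1. Every fixed-point-free involution ι of {1,…,2n} satisfies l(ι) ≥ n, and l(ι) = n if and only if ι = J̄_n; that is, J̄_n is the unique shortest fixed-point-free involution of {1,…,2n}. -/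
/-- The fixed-point-free involution `J̄ₙ = 2143⋯(2n)(2n−1)`, in 0-based indexing:
it swaps `2k ↔ 2k+1`. -/
def Jbar (n : ℕ) : Equiv.Perm (Fin (2*n)) where
  toFun i := ⟨2*(i.val/2) + (1 - i.val % 2), by have := i.isLt; omega⟩
  invFun i := ⟨2*(i.val/2) + (1 - i.val % 2), by have := i.isLt; omega⟩
  left_inv i := by apply Fin.ext; simp only; omega
  right_inv i := by apply Fin.ext; simp only; omega

lemma Jbar_val {n : ℕ} (i : Fin (2*n)) :
    ((Jbar n) i).val = 2*(i.val/2) + (1 - i.val % 2) := rfl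

/-- The set of inversions of a permutation. -/
def invSet {n : ℕ} (ι : Equiv.Perm (Fin (2*n))) : Finset (Fin (2*n) × Fin (2*n)) :=
  Finset.univ.filter fun p => p.1 < p.2 ∧ ι p.2 < ι p.1

/-- The set of 2-cycles (as ordered pairs) of a permutation. -/
def pairSet {n : ℕ} (ι : Equiv.Perm (Fin (2*n))) : Finset (Fin (2*n) × Fin (2*n)) :=
  Finset.univ.filter fun p => p.1 < p.2 ∧ ι p.1 = p.2

lemma invol_apply {n : ℕ} {ι : Equiv.Perm (Fin (2*n))} (hι : isFPF ι) (i : Fin (2*n)) :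
    ι (ι i) = i := by
  rw [← Equiv.Perm.mul_apply, hι.1, Equiv.Perm.one_apply]

lemma pairSet_card {n : ℕ} {ι : Equiv.Perm (Fin (2*n))} (hι : isFPF ι) :
    (pairSet ι).card = n := by
  have h2 := invol_apply hι
  set E := Finset.univ.filter (fun i : Fin (2*n) => i < ι i) with hE
  set F := Finset.univ.filter (fun i : Fin (2*n) => ¬ i < ι i) with hF
  have hPE : (pairSet ι).card = E.card := by
    apply Finset.card_bij (fun p _ => p.1)
    · intro p hp
      simp only [pairSet, Finset.mem_filter, Finset.mem_univ, true_and] at hp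
      simp only [hE, Finset.mem_filter, Finset.mem_univ, true_and, hp.2]
      exact hp.1
    · intro p hp q hq h
      simp only [pairSet, Finset.mem_filter, Finset.mem_univ, true_and] at hp hq
      exact Prod.ext h (by rw [← hp.2, ← hq.2, h])
    · intro i hi
      simp only [hE, Finset.mem_filter, Finset.mem_univ, true_and] at hi
      exact ⟨(i, ι i), by simp [pairSet, hi], rfl⟩
  have hEF : E.card = F.card := by
    apply Finset.card_bij (fun i _ => ι i)
    · intro i hi
      simp only [hE, Finset.mem_filter, Finset.mem_univ, true_and] at hi
      simp only [hF, Finset.mem_filter, Finset.mem_univ, true_and, h2, not_lt]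
      exact le_of_lt hi
    · intro i _ j _ h
      exact ι.injective h
    · intro j hj
      simp only [hF, Finset.mem_filter, Finset.mem_univ, true_and, not_lt] at hj
      refine ⟨ι j, ?_, h2 j⟩
      simp only [hE, Finset.mem_filter, Finset.mem_univ, true_and, h2]
      exact lt_of_le_of_ne hj (fun h => hι.2 j h)
  have hsum : E.card + F.card = 2*n := by
    rw [hE, hF, Finset.card_filter_add_card_filter_not, Finset.card_univ,
      Fintype.card_fin]
  omega

lemma pairSet_subset_invSet {n : ℕ} {ι : Equiv.Perm (Fin (2*n))} (hι : isFPF ι) :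
    pairSet ι ⊆ invSet ι := by
  intro p hp
  simp only [pairSet, Finset.mem_filter, Finset.mem_univ, true_and] at hp
  simp only [invSet, Finset.mem_filter, Finset.mem_univ, true_and]
  refine ⟨hp.1, ?_⟩
  rw [← hp.2, invol_apply hι, hp.2]
  exact hp.1

lemma adj {n : ℕ} {ι : Equiv.Perm (Fin (2*n))} (hι : isFPF ι)
    (heq : invSet ι = pairSet ι) : ∀ i : Fin (2*n), i < ι i → (ι i).val = i.val + 1 := by
  intro i hi
  by_contra hne
  have hiv : i.val < (ι i).val := hi
  have h1 : i.val + 1 < (ι i).val := by omega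
  set j : Fin (2*n) := ⟨i.val + 1, by have := (ι i).isLt; omega⟩ with hj
  have hij : i ≠ j := by simp [Fin.ext_iff, hj]
  have hIJ : ι i ≠ ι j := fun h => hij (ι.injective h)
  rcases lt_or_gt_of_ne hIJ.symm with h | h
  · -- ι j < ι i : (i, j) is an inversion
    have hmem : (i, j) ∈ invSet ι := by
      simp only [invSet, Finset.mem_filter, Finset.mem_univ, true_and]
      exact ⟨by simp [Fin.lt_def, hj], h⟩
    rw [heq] at hmem
    simp only [pairSet, Finset.mem_filter, Finset.mem_univ, true_and] at hmem
    have : (ι i).val = i.val + 1 := by rw [hmem.2]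
    omega
  · -- ι i < ι j : (j, ι i) is an inversion
    have hmem : (j, ι i) ∈ invSet ι := by
      simp only [invSet, Finset.mem_filter, Finset.mem_univ, true_and]
      refine ⟨by simp [Fin.lt_def, hj]; omega, ?_⟩
      rw [invol_apply hι]
      calc i < j := by simp [Fin.lt_def, hj]
        _ < ι i := by simp [Fin.lt_def, hj]; omega
        _ < ι j := h
    rw [heq] at hmem
    simp only [pairSet, Finset.mem_filter, Finset.mem_univ, true_and] at hmem
    exact hIJ hmem.2.symm

lemma adj2 {n : ℕ} {ι : Equiv.Perm (Fin (2*n))} (hι : isFPF ι)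
    (heq : invSet ι = pairSet ι) :
    ∀ i : Fin (2*n), (ι i).val = i.val + 1 ∨ i.val = (ι i).val + 1 := by
  intro i
  rcases lt_or_gt_of_ne (hι.2 i) with h | h
  · right
    have := adj hι heq (ι i) (by rw [invol_apply hι]; exact h)
    rw [invol_apply hι] at this
    omega
  · left
    exact adj hι heq i h

lemma eq_Jbar {n : ℕ} {ι : Equiv.Perm (Fin (2*n))} (hι : isFPF ι)
    (heq : invSet ι = pairSet ι) : ι = Jbar n := by
  have key : ∀ m : ℕ, ∀ i : Fin (2*n), i.val = m → (ι i).val = 2*(m/2) + (1 - m % 2) := by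
    intro m
    induction m using Nat.strong_induction_on with
    | _ m IH =>
      intro i him
      rcases adj2 hι heq i with h | h
      · -- ι i has value m + 1
        rcases Nat.even_or_odd m with he | ho
        · have := Nat.even_iff.mp he; omega
        · -- m odd: contradiction
          exfalso
          have hm1 : 1 ≤ m := ho.pos
          have hlt : m - 1 < 2*n := by have := i.isLt; omega
          have hIHj := IH (m-1) (by omega) ⟨m-1, hlt⟩ rfl
          have hmo := Nat.odd_iff.mp ho
          have hjv : (ι ⟨m-1, hlt⟩).val = m := by omega
          have hji : ι ⟨m-1, hlt⟩ = i := Fin.ext (by rw [hjv, him])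
          have : ι i = ⟨m-1, hlt⟩ := by rw [← hji, invol_apply hι]
          have : (ι i).val = m - 1 := by rw [this]
          omega
      · -- i has value (ι i) + 1
        rcases Nat.even_or_odd m with he | ho
        · -- m even: contradiction
          exfalso
          have hme := Nat.even_iff.mp he
          have hm1 : 1 ≤ m := by omega
          have hlt : m - 1 < 2*n := by have := i.isLt; omega
          have hjeq : ι i = ⟨m-1, hlt⟩ := Fin.ext (by simp; omega)
          have hIHj := IH (m-1) (by omega) ⟨m-1, hlt⟩ rfl
          have : (ι ⟨m-1, hlt⟩).val = i.val := by rw [← hjeq, invol_apply hι]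
          omega
        · have := Nat.odd_iff.mp ho; omega
  apply Equiv.ext
  intro i
  apply Fin.ext
  rw [key i.val i rfl, Jbar_val]

lemma Jbar_isFPF {n : ℕ} : isFPF (Jbar n) := by
  constructor
  · apply Equiv.ext
    intro i
    apply Fin.ext
    rw [Equiv.Perm.mul_apply, Jbar_val, Jbar_val, Equiv.Perm.one_apply]
    omega
  · intro i h
    have := congrArg Fin.val h
    rw [Jbar_val] at this
    omega

lemma invSet_Jbar_subset {n : ℕ} : invSet (Jbar n) ⊆ pairSet (Jbar n) := by
  intro p hp
  simp only [invSet, Finset.mem_filter, Finset.mem_univ, true_and, Fin.lt_def] at hp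
  simp only [pairSet, Finset.mem_filter, Finset.mem_univ, true_and, Fin.lt_def]
  refine ⟨hp.1, Fin.ext ?_⟩
  have h1 := hp.1
  have h2 := hp.2
  simp only [Jbar_val] at h2 ⊢
  omega

/-- every fixed-point-free involution of `{1,…,2n}` has length at least
`n`, with equality iff it is `J̄ₙ`. -/
theorem Jbar_unique_shortest {n : ℕ} (hn : 1 ≤ n)
    (ι : Equiv.Perm (Fin (2*n))) (hι : isFPF ι) :
    n ≤ invLength ι ∧ (invLength ι = n ↔ ι = Jbar n) := by
  have hlen : invLength ι = (invSet ι).card := rfl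
  have hle : n ≤ invLength ι := by
    have h := Finset.card_le_card (pairSet_subset_invSet hι)
    rw [pairSet_card hι] at h
    rw [hlen]
    exact h
  refine ⟨hle, ?_, ?_⟩
  · intro h
    apply eq_Jbar hι
    apply (Finset.eq_of_subset_of_card_le (pairSet_subset_invSet hι) ?_).symm
    rw [← hlen, h, pairSet_card hι]
  · intro h
    subst h
    have : invSet (Jbar n) = pairSet (Jbar n) :=
      Finset.Subset.antisymm invSet_Jbar_subset (pairSet_subset_invSet Jbar_isFPF)
    rw [hlen, this, pairSet_card Jbar_isFPF]
end

section
/- Let ι be a fixed-point-free involution of {1,…,2n} with ι ≠ J̄_n. Then there exists an index i with 1 ≤ i ≤ 2n−1 such that ι(i) > ι(i+1) and ι(i) ≠ i+1; moreover, for any such i, the conjugate ι' = s_i ∘ ι ∘ s_i (where s_i is the transposition exchanging i and i+1) is a fixed-point-free involution with l(ι') = l(ι) − 2. -/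
open Equiv Finset

lemma isFPF.apply_apply {m : ℕ} {ι : Perm (Fin m)} (hι : isFPF ι) (x : Fin m) : ι (ι x) = x :=
  Perm.ext_iff.mp hι.1 x

lemma isFPF.conj {m : ℕ} {ι : Perm (Fin m)} (hι : isFPF ι) (σ : Perm (Fin m)) :
    isFPF (σ * ι * σ⁻¹) := by
  refine ⟨?_, fun x hx => hι.2 (σ⁻¹ x) (Perm.eq_inv_iff_eq.mpr hx)⟩
  calc σ * ι * σ⁻¹ * (σ * ι * σ⁻¹) = σ * (ι * ι) * σ⁻¹ := by group
    _ = 1 := by rw [hι.1, mul_one, mul_inv_cancel]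

def inversions {m : ℕ} (π : Perm (Fin m)) : Finset (Fin m × Fin m) :=
  univ.filter fun p => p.1 < p.2 ∧ π p.2 < π p.1

@[simp]
lemma mem_inversions {m : ℕ} {π : Perm (Fin m)} {p : Fin m × Fin m} :
    p ∈ inversions π ↔ p.1 < p.2 ∧ π p.2 < π p.1 := by
  simp [inversions]

lemma invLength_eq_card_inversions {m : ℕ} (π : Perm (Fin m)) :
    invLength π = #(inversions π) := rfl

lemma invLength_inv {m : ℕ} (π : Perm (Fin m)) : invLength π⁻¹ = invLength π := by
  rw [invLength_eq_card_inversions, invLength_eq_card_inversions]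
  refine card_nbij' (fun p => (π⁻¹ p.2, π⁻¹ p.1)) (fun q => (π q.2, π q.1)) ?_ ?_ ?_ ?_ <;>
    intro p <;> simp +contextual

lemma swap_apply_lt_swap_apply_iff {m : ℕ} {i j : Fin m} (hij : (j : ℕ) = i + 1) {a b : Fin m} :
    swap i j a < swap i j b ↔ a < b ∧ ¬(a = i ∧ b = j) ∨ a = j ∧ b = i := by
  rw [swap_apply_def, swap_apply_def]
  simp only [Fin.ext_iff, Fin.lt_def]
  split_ifs <;> omega

lemma map_inversions_mul_swap {m : ℕ} (π : Perm (Fin m)) {i j : Fin m}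
    (hij : (j : ℕ) = i + 1) (hd : π j < π i) :
    (inversions (π * swap i j)).map (prodCongr (swap i j) (swap i j)).toEmbedding =
      (inversions π).erase (i, j) := by
  ext ⟨a, b⟩
  simp only [mem_map_equiv, prodCongr_symm, symm_swap, prodCongr_apply, Prod.map_apply,
    mem_inversions, mem_erase, Perm.mul_apply, swap_apply_self, swap_apply_lt_swap_apply_iff hij,
    ne_eq, Prod.mk.injEq]
  constructor
  · rintro ⟨⟨hab, hne⟩ | ⟨rfl, rfl⟩, hπ⟩
    · exact ⟨hne, hab, hπ⟩
    · exact absurd hπ (asymm hd)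
  · rintro ⟨hne, hab, hπ⟩
    exact ⟨Or.inl ⟨hab, hne⟩, hπ⟩

lemma invLength_mul_swap_add_one {m : ℕ} (π : Perm (Fin m)) {i j : Fin m}
    (hij : (j : ℕ) = i + 1) (hd : π j < π i) :
    invLength (π * swap i j) + 1 = invLength π := by
  have hmem : (i, j) ∈ inversions π := mem_inversions.mpr ⟨show i < j by omega, hd⟩
  rw [invLength_eq_card_inversions, invLength_eq_card_inversions, ← card_erase_add_one hmem,
    ← map_inversions_mul_swap π hij hd, card_map]

lemma isFPF.invLength_swap_mul_mul_swap_add_two {m : ℕ} {ι : Perm (Fin m)} (hι : isFPF ι)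
    {i j : Fin m} (hij : (j : ℕ) = i + 1) (hd : ι j < ι i) (hne : ι i ≠ j) :
    invLength (swap i j * ι * swap i j) + 2 = invLength ι := by
  have hj : ι j ≠ i := fun h => hne (by rw [← h, hι.apply_apply])
  have hd' : (swap i j * ι) j < (swap i j * ι) i := by
    rwa [Perm.mul_apply, Perm.mul_apply, swap_apply_of_ne_of_ne hj (hι.2 j),
      swap_apply_of_ne_of_ne (hι.2 i) hne]
  calc invLength (swap i j * ι * swap i j) + 2 = invLength (swap i j * ι) + 1 := by
        rw [← invLength_mul_swap_add_one _ hij hd']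
    _ = invLength (ι * swap i j) + 1 := by
        rw [← invLength_inv, mul_inv_rev, swap_inv, inv_eq_of_mul_eq_one_left hι.1]
    _ = invLength ι := invLength_mul_swap_add_one ι hij hd

lemma isFPF.exists_descent_of_ne_Jbar {n : ℕ} {ι : Perm (Fin (2 * n))} (hι : isFPF ι)
    (hne : ι ≠ Jbar n) :
    ∃ i j : Fin (2 * n), (j : ℕ) = i + 1 ∧ ι j < ι i ∧ ι i ≠ j := by
  obtain ⟨x₀, hx₀⟩ : ∃ x, ι x ≠ Jbar n x := not_forall.mp (mt Equiv.ext hne)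
  obtain ⟨x, hx, hmin⟩ := WellFounded.has_min wellFounded_lt {x | ι x ≠ Jbar n x} ⟨x₀, hx₀⟩
  simp only [Set.mem_ofPred_eq, not_imp_not] at hx hmin
  have hJ : ∀ z, (Jbar n z : ℕ) = 2 * (z / 2) + (1 - z % 2) := fun _ => rfl
  have hbelow : ∀ z < x, (ι z : ℕ) = 2 * (z / 2) + (1 - z % 2) := fun z hz => by
    rw [hmin z hz, hJ]
  have hx_even : (x : ℕ) % 2 = 0 := by
    by_contra hodd
    let w : Fin (2 * n) := ⟨x - 1, by omega⟩
    have hw : (w : ℕ) = x - 1 := rfl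
    have hιw : ι w = x := Fin.ext (by rw [hbelow w (by omega)]; omega)
    exact hx (Fin.ext (by rw [← hιw, hι.apply_apply, hJ]; omega))
  have hge : ∀ z, x ≤ z → x ≤ ι z := fun z hz => by
    by_contra! hlt
    have := hbelow _ hlt
    rw [hι.apply_apply] at this
    omega
  set y := ι x
  have hy : ι y = x := hι.apply_apply x
  have hxy : (x : ℕ) + 2 ≤ y := by
    have h1 : (y : ℕ) ≠ x := Fin.val_ne_of_ne (hι.2 x)
    have h2 : x ≤ y := hge x le_rfl
    have h3 : (y : ℕ) ≠ x + 1 := fun h => hx (Fin.ext (by rw [hJ]; omega))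
    omega
  let i : Fin (2 * n) := ⟨y - 1, by omega⟩
  have hi : (i : ℕ) = y - 1 := rfl
  have hιi : ι i ≠ ι y := ι.injective.ne (Fin.ne_of_val_ne (by omega))
  refine ⟨i, y, by omega, ?_, ι.injective.ne (Fin.ne_of_val_ne (by omega))⟩
  rw [hy] at hιi ⊢
  exact lt_of_le_of_ne (hge i (by omega)) hιi.symm

/-- if `ι ≠ J̄ₙ` is a fixed-point-free involution then there is an index
`i` with `ι(i) > ι(i+1)` and `ι(i) ≠ i+1`; and for any such `i`, conjugating by the
simple transposition `sᵢ` gives a fixed-point-free involution of length `l(ι) − 2`. -/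
theorem conjugate_descent {n : ℕ} (ι : Equiv.Perm (Fin (2*n))) (hι : isFPF ι)
    (hne : ι ≠ Jbar n) :
    (∃ i : Fin (2*n), ∃ h : i.val + 1 < 2*n,
      ι ⟨i.val + 1, h⟩ < ι i ∧ ι i ≠ ⟨i.val + 1, h⟩) ∧
    (∀ i : Fin (2*n), ∀ h : i.val + 1 < 2*n,
      ι ⟨i.val + 1, h⟩ < ι i → ι i ≠ ⟨i.val + 1, h⟩ →
      isFPF (Equiv.swap i ⟨i.val + 1, h⟩ * ι * Equiv.swap i ⟨i.val + 1, h⟩) ∧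
      invLength (Equiv.swap i ⟨i.val + 1, h⟩ * ι * Equiv.swap i ⟨i.val + 1, h⟩) + 2
        = invLength ι) := by
  refine ⟨?_, fun i h hd hne' => ⟨?_, hι.invLength_swap_mul_mul_swap_add_two rfl hd hne'⟩⟩
  · obtain ⟨i, j, hij, hd, hne'⟩ := hι.exists_descent_of_ne_Jbar hne
    have hj : (⟨i + 1, hij ▸ j.isLt⟩ : Fin (2 * n)) = j := Fin.ext hij.symm
    exact ⟨i, _, by rwa [hj], by rwa [hj]⟩
  · simpa using hι.conj (swap i ⟨i.val + 1, h⟩)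
end

section
/- Let ι be a fixed-point-free involution of {1,…,2n} and suppose (i,j) is a cell of the symplectic diagram of ι (so i < j, ι(i) > j, and ι(j) > i) whose rank condition r_{ij}(ι) is odd, say r_{ij}(ι) = 2k+1. Then i ≥ 2 and r_{i−1,i}(ι) ≤ 2k. -/
/-- The rank matrix entry `r_{ij}(π) = #{k ≤ i : π(k) ≤ j}` (0-based indices:
`rkm π i j` is the 1-based entry `r_{i+1, j+1}`). -/
def rkm {m : ℕ} (π : Equiv.Perm (Fin m)) (i j : Fin m) : ℕ :=
  Finset.card (Finset.univ.filter fun k : Fin m => k ≤ i ∧ π k ≤ j)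

/-- `(i,j)` is a cell of the symplectic diagram of `ι`: a Rothe diagram cell with `i < j`. -/
def inSympDiag {m : ℕ} (ι : Equiv.Perm (Fin m)) (i j : Fin m) : Prop :=
  i < j ∧ j < ι i ∧ i < ι⁻¹ j

/-- A symplectic essential box: a symplectic diagram cell with no symplectic diagram
cell immediately south or east of it. -/
def sympEssBox {m : ℕ} (ι : Equiv.Perm (Fin m)) (i j : Fin m) : Prop :=
  inSympDiag ι i j ∧
  (∀ h : i.val + 1 < m, ¬ inSympDiag ι ⟨i.val + 1, h⟩ j) ∧
  (∀ h : j.val + 1 < m, ¬ inSympDiag ι i ⟨j.val + 1, h⟩)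

lemma even_card_of_invol {α : Type*} [DecidableEq α] (f : α → α)
    (hf : ∀ a, f (f a) = a) (hfix : ∀ a, f a ≠ a) :
    ∀ (T : Finset α), (∀ a ∈ T, f a ∈ T) → Even T.card := by
  intro T
  induction T using Finset.strongInduction with
  | _ T ih =>
    intro hT
    rcases T.eq_empty_or_nonempty with h | ⟨a, ha⟩
    · simp [h]
    · have hfa : f a ∈ T := hT a ha
      have hne : f a ≠ a := hfix a
      have hinj : Function.Injective f := Function.Involutive.injective hf
      set T' := T \ {a, f a} with hT'
      have hsub : T' ⊂ T :=
        (Finset.ssubset_iff_of_subset Finset.sdiff_subset).mpr ⟨a, ha, by simp [hT']⟩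
      have hinv : ∀ b ∈ T', f b ∈ T' := by
        intro b hb
        simp only [hT', Finset.mem_sdiff, Finset.mem_insert, Finset.mem_singleton] at hb ⊢
        push_neg at hb ⊢
        exact ⟨hT b hb.1, fun h => hb.2.2 (by rw [← h, hf]), fun h => hb.2.1 (hinj h)⟩
      have hcard : T.card = T'.card + 2 := by
        have hsubset : ({a, f a} : Finset α) ⊆ T := by
          intro x hx; simp at hx; rcases hx with h | h <;> simp [h, ha, hfa]
        have h3 := Finset.card_sdiff_add_card_eq_card hsubset
        rw [← hT'] at h3
        have h2 : ({a, f a} : Finset α).card = 2 := Finset.card_pair hne.symm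
        omega
      rcases ih T' hsub hinv with ⟨c, hc⟩
      exact ⟨c + 1, by omega⟩

/-- if a symplectic diagram cell `(i,j)` of a fixed-point-free involution
has odd rank condition `2k+1`, then `i ≥ 2` (1-based; `i.val ≥ 1` 0-based) and the
rank condition at `(i−1, i)` is at most `2k`. -/
theorem odd_rank_forces_even_above {n : ℕ} (ι : Equiv.Perm (Fin (2*n))) (hι : isFPF ι)
    (i j : Fin (2*n)) (hcell : inSympDiag ι i j) (k : ℕ)
    (hodd : rkm ι i j = 2*k + 1) :
    1 ≤ i.val ∧ rkm ι ⟨i.val - 1, by have := i.isLt; omega⟩ i ≤ 2*k := by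

  obtain ⟨hmul, hfix⟩ := hι
  have hinv : ∀ a, ι (ι a) = a := by
    intro a
    have := congrArg (fun σ : Equiv.Perm (Fin (2*n)) => σ a) hmul
    simpa using this
  obtain ⟨hij, hji, _⟩ := hcell
  -- i.val ≥ 1
  have hS : (Finset.univ.filter fun k : Fin (2*n) => k ≤ i ∧ ι k ≤ j).card = 2*k+1 := hodd
  have hi1 : 1 ≤ i.val := by
    have hpos : 0 < (Finset.univ.filter fun k : Fin (2*n) => k ≤ i ∧ ι k ≤ j).card := by omega
    obtain ⟨k₀, hk₀⟩ := Finset.card_pos.mp hpos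
    simp only [Finset.mem_filter, Finset.mem_univ, true_and] at hk₀
    have hk₀i : k₀ ≠ i := by
      rintro rfl
      exact absurd hk₀.2 (not_le.mpr hji)
    have : k₀.val < i.val := lt_of_le_of_ne (Fin.le_def.mp hk₀.1) (fun h => hk₀i (Fin.ext h))
    omega
  refine ⟨hi1, ?_⟩
  set T := Finset.univ.filter (fun k : Fin (2*n) => k ≤ i ∧ ι k ≤ i) with hT
  have hiT : ι i ≠ i ∧ ¬ (ι i ≤ i) := by
    constructor
    · exact hfix i
    · exact not_le.mpr (lt_trans hij hji)
  have heq : rkm ι ⟨i.val - 1, by have := i.isLt; omega⟩ i = T.card := by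
    unfold rkm
    congr 1
    apply Finset.filter_congr
    intro x _
    simp only [Fin.le_def]
    constructor
    · rintro ⟨h1, h2⟩; exact ⟨by omega, h2⟩
    · rintro ⟨h1, h2⟩
      refine ⟨?_, h2⟩
      have hxi : x ≠ i := by
        rintro rfl
        exact hiT.2 (Fin.le_def.mpr h2)
      have : x.val < i.val := lt_of_le_of_ne h1 (fun h => hxi (Fin.ext h))
      simpa using by omega
  rw [heq]
  have heven : Even T.card := by
    apply even_card_of_invol ι hinv hfix
    intro a ha
    simp only [hT, Finset.mem_filter, Finset.mem_univ, true_and] at ha ⊢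
    exact ⟨ha.2, by rw [hinv]; exact ha.1⟩
  have hle : T.card ≤ 2*k+1 := by
    rw [← hS]
    apply Finset.card_le_card
    intro x hx
    simp only [hT, Finset.mem_filter, Finset.mem_univ, true_and] at hx ⊢
    exact ⟨hx.1, le_trans hx.2 (le_of_lt hij)⟩
  obtain ⟨c, hc⟩ := heven
  omega
end

section
/- Let ι be a fixed-point-free involution of {1,…,2n} and let S = {ι' ∈ A : ι ⪯ ι'}. Then ι is the greatest lower bound of S in the poset of fixed-point-free involutions of {1,…,2n} under the opposite Bruhat order ⪯; that is, ι ⪯ ι' for every ι' ∈ S, and every fixed-point-free involution τ with τ ⪯ ι' for all ι' ∈ S satisfies τ ⪯ ι. In particular, A contains the basic elements of this poset. -/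
/-- The opposite Bruhat order: `ι ⪯ ι'` iff `r_{ij}(ι) ≤ r_{ij}(ι')` for all `i, j`. -/
def oppLE {m : ℕ} (ι ι' : Equiv.Perm (Fin m)) : Prop :=
  ∀ i j, rkm ι i j ≤ rkm ι' i j

/-- `𝒜ₑ`: fixed-point-free involutions with exactly one symplectic essential box,
whose rank condition is even. -/
def memAe {n : ℕ} (ι : Equiv.Perm (Fin (2*n))) : Prop :=
  isFPF ι ∧ ∃ p : Fin (2*n) × Fin (2*n),
    sympEssBox ι p.1 p.2 ∧ Even (rkm ι p.1 p.2) ∧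
    ∀ q : Fin (2*n) × Fin (2*n), sympEssBox ι q.1 q.2 → q = p

/-- `𝒜ₒ`: fixed-point-free involutions with exactly two symplectic essential boxes,
one at `(p, p+1)` with even rank condition `2r` and one in row `p+1` with rank
condition `2r+1`. -/
def memAo {n : ℕ} (ι : Equiv.Perm (Fin (2*n))) : Prop :=
  isFPF ι ∧ ∃ p q : Fin (2*n) × Fin (2*n), ∃ r : ℕ,
    p ≠ q ∧ sympEssBox ι p.1 p.2 ∧ sympEssBox ι q.1 q.2 ∧
    p.2.val = p.1.val + 1 ∧ rkm ι p.1 p.2 = 2*r ∧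
    q.1.val = p.1.val + 1 ∧ rkm ι q.1 q.2 = 2*r + 1 ∧
    ∀ s : Fin (2*n) × Fin (2*n), sympEssBox ι s.1 s.2 → s = p ∨ s = q

/-- `𝒜 = 𝒜ₑ ∪ 𝒜ₒ`. -/
def memA {n : ℕ} (ι : Equiv.Perm (Fin (2*n))) : Prop := memAe ι ∨ memAo ι

/-!
For fixed-point-free involutions, `τ ⪯ ι` already follows from `r_{ij}(τ) ≤ r_{ij}(ι)` at the
symplectic essential boxes `(i, j)` of `ι`. The rank matrices are symmetric, so it is enough to
compare on and above the diagonal. On the diagram, `r(ι)` is constant going south or east up to an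
essential box, while `r(τ)` can only grow. Off the diagram, `ι` has a `1` in the last row or the
last column of the rectangle, so `r(ι)` exceeds its value on a smaller rectangle by one while `r(τ)`
exceeds it by at most one. On the diagonal both ranks are even.

Conversely, every essential box `(i, j)` of `ι`, with rank condition `r`, is an essential box with
the same rank condition of an explicit basic element `ι' ∈ A` whose other rank conditions are at
most those of `ι`. So `ι ⪯ ι'`, and every lower bound `τ` of `S` has `r_{ij}(τ) ≤ r_{ij}(ι') = r`.
-/

open Finset Function

lemma even_card_of_involutive {α : Type*} {s : Finset α} {g : α → α} (hg : Involutive g)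
    (hfix : ∀ x, g x ≠ x) (hs : ∀ x ∈ s, g x ∈ s) : Even #s := by
  rw [← ZMod.natCast_eq_zero_iff_even, card_eq_sum_ones, Nat.cast_sum, Nat.cast_one]
  exact sum_involution (fun x _ => g x) (fun _ _ => by decide) (fun x _ _ => hfix x) hs
    (fun x _ => hg x)

namespace isFPF

variable {m : ℕ} {ι : Equiv.Perm (Fin m)}

lemma involutive (h : isFPF ι) : Involutive ι := fun k => congrArg (· k) h.1

end isFPF

namespace SymplecticRank

variable {m : ℕ}

def rk (π : Equiv.Perm (Fin m)) (a b : ℕ) : ℕ := #{k : Fin m | k.val ≤ a ∧ (π k).val ≤ b}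

lemma rkm_eq_rk (π : Equiv.Perm (Fin m)) (i j : Fin m) : rkm π i j = rk π i j := rfl

lemma card_filter_val_le {a : ℕ} (ha : a < m) : #{k : Fin m | k.val ≤ a} = a + 1 := by
  simpa [Nat.lt_add_one_iff, ha] using Fin.card_filter_val_lt (n := m) (m := a + 1)

section Rank

variable (π : Equiv.Perm (Fin m))

lemma rk_mono {a a' b b' : ℕ} (ha : a ≤ a') (hb : b ≤ b') : rk π a b ≤ rk π a' b' :=
  card_le_card fun k hk => by
    simp only [mem_filter, mem_univ, true_and] at hk ⊢
    omega

lemma rk_le_succ (a b : ℕ) : rk π a b ≤ a + 1 :=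
  (card_le_card fun k hk => by simp_all).trans
    ((Fin.card_filter_val_lt (n := m) (m := a + 1)).trans_le (min_le_right _ _))

lemma rk_le_of_lt_apply {a b : ℕ} (ha : a < m) (h : b < (π ⟨a, ha⟩).val) : rk π a b ≤ a := by
  refine (card_le_card fun k hk => ?_).trans
    ((Fin.card_filter_val_lt (n := m) (m := a)).trans_le (min_le_right _ _))
  simp only [mem_filter, mem_univ, true_and] at hk ⊢
  refine hk.1.lt_of_ne fun hka => ?_
  have : k = ⟨a, ha⟩ := Fin.ext hka
  subst this
  omega

lemma one_le_rk {a b : ℕ} (ha : a < m) (h : (π ⟨a, ha⟩).val ≤ b) : 1 ≤ rk π a b :=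
  card_pos.2 ⟨⟨a, ha⟩, by simpa using h⟩

lemma rk_succ_left {a : ℕ} (b : ℕ) (ha : a + 1 < m) :
    rk π (a + 1) b = rk π a b + if (π ⟨a + 1, ha⟩).val ≤ b then 1 else 0 := by
  have hsplit : ∀ k : Fin m, (k.val ≤ a + 1 ∧ (π k).val ≤ b) ↔
      (k = ⟨a + 1, ha⟩ ∧ (π ⟨a + 1, ha⟩).val ≤ b) ∨ (k.val ≤ a ∧ (π k).val ≤ b) := by
    intro k
    rcases eq_or_ne k ⟨a + 1, ha⟩ with rfl | hk
    · simp
    · have : k.val ≠ a + 1 := fun h => hk (Fin.ext h)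
      simp only [hk, false_and, false_or]
      omega
  unfold rk
  simp_rw [hsplit, filter_or]
  split_ifs with hb
  · rw [card_union_of_disjoint (disjoint_filter.2 fun k _ h h' => by simp_all), add_comm]
    simp [hb, filter_eq']
  · simp [hb]

lemma rk_succ_left_le {a : ℕ} (b : ℕ) (ha : a + 1 < m) : rk π (a + 1) b ≤ rk π a b + 1 := by
  rw [rk_succ_left π b ha]
  split_ifs <;> omega

lemma add_add_two_le_rk_add {a b : ℕ} (ha : a < m) (hb : b < m) :
    a + b + 2 ≤ rk π a b + m := by
  have hcol : #{k : Fin m | (π k).val ≤ b} = b + 1 := by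
    rw [← card_filter_val_le hb]
    exact card_nbij' π π.symm (fun k hk => by simpa using hk) (fun k hk => by simpa using hk)
      (fun k _ => by simp) (fun k _ => by simp)
  let rows : Finset (Fin m) := {k | k.val ≤ a}
  let cols : Finset (Fin m) := {k | (π k).val ≤ b}
  have hunion := card_union_add_card_inter rows cols
  have huniv := card_le_univ (rows ∪ cols)
  rw [card_filter_val_le ha, hcol, ← filter_and] at hunion
  rw [Fintype.card_fin] at huniv
  unfold rk
  omega

variable {π}

lemma rk_comm (hπ : Involutive π) (a b : ℕ) : rk π a b = rk π b a :=
  card_nbij' π π (fun k hk => by simp_all [hπ k]) (fun k hk => by simp_all [hπ k])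
    (fun k _ => hπ k) (fun k _ => hπ k)

lemma rk_succ_right (hπ : Involutive π) (a : ℕ) {b : ℕ} (hb : b + 1 < m) :
    rk π a (b + 1) = rk π a b + if (π ⟨b + 1, hb⟩).val ≤ a then 1 else 0 := by
  rw [rk_comm hπ, rk_succ_left π a hb, rk_comm hπ]

lemma rk_succ_right_le (hπ : Involutive π) (a : ℕ) {b : ℕ} (hb : b + 1 < m) :
    rk π a (b + 1) ≤ rk π a b + 1 := by
  rw [rk_comm hπ, rk_comm hπ a]
  exact rk_succ_left_le π a hb

lemma even_rk_self (hπ : isFPF π) (a : ℕ) : Even (rk π a a) :=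
  even_card_of_involutive hπ.involutive hπ.2 fun k hk => by simp_all [hπ.involutive k]

lemma rk_zero_zero (hπ : isFPF π) : rk π 0 0 = 0 := by
  obtain ⟨c, hc⟩ := even_rk_self hπ 0
  have := rk_le_succ π 0 0
  omega

end Rank

section Reduction

variable {τ ι : Equiv.Perm (Fin m)}

lemma inSympDiag_iff (hι : Involutive ι) {a b : Fin m} :
    inSympDiag ι a b ↔ a.val < b.val ∧ b.val < (ι a).val ∧ a.val < (ι b).val := by
  rw [inSympDiag, Equiv.Perm.inv_eq_iff_eq.2 (hι b).symm]
  rfl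

/-- The rank of `ι` does not change from a diagram cell to the next one south or east, so a cell
maximal among those south-east of `(a, b)` with the same rank is an essential box. -/
lemma exists_sympEssBox_rk_eq (hι : Involutive ι) {a b : Fin m} (hab : inSympDiag ι a b) :
    ∃ a' b' : Fin m, a ≤ a' ∧ b ≤ b' ∧ sympEssBox ι a' b' ∧ rk ι a' b' = rk ι a b := by
  classical
  let cells : Finset (Fin m × Fin m) :=
    {p | inSympDiag ι p.1 p.2 ∧ a ≤ p.1 ∧ b ≤ p.2 ∧ rk ι p.1 p.2 = rk ι a b}
  obtain ⟨⟨a', b'⟩, hmem, hmax⟩ :=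
    cells.exists_max_image (fun p => p.1.val + p.2.val) ⟨(a, b), by simp [cells, hab]⟩
  simp only [cells, mem_filter, mem_univ, true_and] at hmem hmax
  obtain ⟨hdiag, ha, hb, hrk⟩ := hmem
  refine ⟨a', b', ha, hb, ⟨hdiag, fun h hs => ?_, fun h he => ?_⟩, hrk⟩
  · have hs' := (inSympDiag_iff hι).1 hs
    have hrk' : rk ι (a'.val + 1) b' = rk ι a b := by
      rw [rk_succ_left ι _ h, if_neg (by omega), hrk, add_zero]
    have := hmax (⟨a'.val + 1, h⟩, b') ⟨hs, Nat.le_succ_of_le ha, hb, hrk'⟩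
    simp at this
  · have he' := (inSympDiag_iff hι).1 he
    have hrk' : rk ι a' (b'.val + 1) = rk ι a b := by
      rw [rk_succ_right hι _ h, if_neg (by omega), hrk, add_zero]
    have := hmax (a', ⟨b'.val + 1, h⟩) ⟨he, ha, Nat.le_succ_of_le hb, hrk'⟩
    simp at this

lemma rk_le_rk_of_inSympDiag (hι : Involutive ι)
    (H : ∀ a b, sympEssBox ι a b → rkm τ a b ≤ rkm ι a b) {a b : Fin m}
    (hab : inSympDiag ι a b) : rk τ a b ≤ rk ι a b := by
  obtain ⟨a', b', ha, hb, hbox, hrk⟩ := exists_sympEssBox_rk_eq hι hab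
  calc rk τ a b ≤ rk τ a' b' := rk_mono τ ha hb
    _ ≤ rk ι a' b' := H a' b' hbox
    _ = rk ι a b := hrk

lemma rk_succ_self_le_of_le (hτ : isFPF τ) (hι : isFPF ι) {a : ℕ} (ha : a + 1 < m)
    (h : rk τ a (a + 1) ≤ rk ι a (a + 1)) : rk τ (a + 1) (a + 1) ≤ rk ι (a + 1) (a + 1) := by
  have hstep := rk_succ_left ι (a + 1) ha
  have := rk_succ_left_le τ (a + 1) ha
  obtain ⟨c, hc⟩ := even_rk_self hτ (a + 1)
  obtain ⟨d, hd⟩ := even_rk_self hι (a + 1)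
  split_ifs at hstep <;> omega

lemma rk_le_rk_of_le (hτ : isFPF τ) (hι : isFPF ι)
    (H : ∀ a b, sympEssBox ι a b → rkm τ a b ≤ rkm ι a b) {a b : ℕ} (hab : a ≤ b) (hb : b < m) :
    rk τ a b ≤ rk ι a b := by
  induction hn : a + b using Nat.strong_induction_on generalizing a b with
  | _ n ih =>
  subst hn
  have ih' : ∀ a' b', a' + b' < a + b → a' ≤ b' → b' < m → rk τ a' b' ≤ rk ι a' b' :=
    fun a' b' hlt hab' hb' => ih _ hlt hab' hb' rfl
  rcases hab.eq_or_lt with rfl | hlt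
  · rcases a with _ | a
    · exact (rk_zero_zero hτ).trans_le (Nat.zero_le _)
    · exact rk_succ_self_le_of_le hτ hι hb (ih' a (a + 1) (by omega) (by omega) hb)
  by_cases hdiag : inSympDiag ι ⟨a, by omega⟩ ⟨b, hb⟩
  · exact rk_le_rk_of_inSympDiag hι.involutive H hdiag
  rw [inSympDiag_iff hι.involutive] at hdiag
  simp only [not_and, not_lt] at hdiag
  by_cases hrow : (ι ⟨a, by omega⟩).val ≤ b
  · rcases a with _ | a
    · exact (rk_le_succ τ 0 b).trans (one_le_rk ι (by omega) hrow)
    · have hstep := rk_succ_left ι b (by omega : a + 1 < m)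
      rw [if_pos hrow] at hstep
      have := rk_succ_left_le τ b (by omega : a + 1 < m)
      have := ih' a b (by omega) (by omega) hb
      omega
  · obtain ⟨b, rfl⟩ : ∃ b', b = b' + 1 := ⟨b - 1, by omega⟩
    have hcol : (ι ⟨b + 1, hb⟩).val ≤ a := hdiag hlt (by omega)
    have hstep := rk_succ_right hι.involutive a hb
    rw [if_pos hcol] at hstep
    have := rk_succ_right_le hτ.involutive a hb
    have := ih' a b (by omega) (by omega) (by omega)
    omega

theorem oppLE_of_forall_sympEssBox (hτ : isFPF τ) (hι : isFPF ι)
    (H : ∀ a b, sympEssBox ι a b → rkm τ a b ≤ rkm ι a b) : oppLE τ ι := by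
  intro i j
  rw [rkm_eq_rk, rkm_eq_rk]
  rcases le_total i.val j.val with h | h
  · exact rk_le_rk_of_le hτ hι H h j.2
  · rw [rk_comm hτ.involutive, rk_comm hι.involutive]
    exact rk_le_rk_of_le hτ hι H h i.2

end Reduction

section OfNat

variable (f : ℕ → ℕ) (hf : ∀ k < m, f k < m) (hff : ∀ k < m, f (f k) = k)

def involutionOfNat : Equiv.Perm (Fin m) :=
  Involutive.toPerm (fun k => ⟨f k, hf k k.2⟩) fun k => Fin.ext (hff k k.2)

variable {f hf hff}

lemma isFPF_involutionOfNat (hfix : ∀ k < m, f k ≠ k) : isFPF (involutionOfNat f hf hff) :=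
  ⟨Equiv.ext fun k => Fin.ext (hff k k.2), fun k h => hfix k k.2 (congrArg Fin.val h)⟩

lemma inSympDiag_involutionOfNat_iff {a b : Fin m} :
    inSympDiag (involutionOfNat f hf hff) a b ↔ a.val < b.val ∧ b.val < f a ∧ a.val < f b :=
  inSympDiag_iff fun k => Fin.ext (hff k k.2)

lemma rk_involutionOfNat {a b c : ℕ} (hc : c ≤ m) (h : ∀ k < m, k ≤ a ∧ f k ≤ b ↔ k < c) :
    rk (involutionOfNat f hf hff) a b = c := by
  rw [rk, ← min_eq_right hc, ← Fin.card_filter_val_lt]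
  exact congrArg card (filter_congr fun k _ => h k k.2)

end OfNat

/-- Sends the rows `2s, …, i` to the columns `j + 1, …, j + 1 + (i - 2s)`, pairs `2t ↔ 2t + 1`
below `2s`, and pairs the other indices consecutively; when `j - i` is odd, `j` is paired with the
first index after the block of columns. -/
def evenBasicFun (s i j k : ℕ) : ℕ :=
  if k < 2 * s then (if k % 2 = 0 then k + 1 else k - 1)
  else if k ≤ i then j + 1 + (k - 2 * s)
  else if k ≤ j then
    (if (k + i) % 2 = 1 then (if k < j then k + 1 else j + (i - 2 * s) + 2) else k - 1)
  else if k ≤ j + (i - 2 * s) + 1 then 2 * s + (k - (j + 1))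
  else if k % 2 = 0 then k + 1
  else if k = j + (i - 2 * s) + 2 then j else k - 1

/-- The branches of `evenBasicFun` as one disjunction, the form in which `omega` can use them. -/
lemma evenBasicFun_cases (s i j k : ℕ) :
    (k < 2 * s ∧ k % 2 = 0 ∧ evenBasicFun s i j k = k + 1) ∨
    (k < 2 * s ∧ k % 2 = 1 ∧ evenBasicFun s i j k = k - 1) ∨
    (2 * s ≤ k ∧ k ≤ i ∧ evenBasicFun s i j k = j + 1 + (k - 2 * s)) ∨
    (i < k ∧ k < j ∧ (k + i) % 2 = 1 ∧ evenBasicFun s i j k = k + 1) ∨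
    (i < k ∧ k = j ∧ (k + i) % 2 = 1 ∧ evenBasicFun s i j k = j + (i - 2 * s) + 2) ∨
    (i < k ∧ k ≤ j ∧ (k + i) % 2 = 0 ∧ evenBasicFun s i j k = k - 1) ∨
    (j < k ∧ k ≤ j + (i - 2 * s) + 1 ∧ evenBasicFun s i j k = 2 * s + (k - (j + 1))) ∨
    (j + (i - 2 * s) + 1 < k ∧ k % 2 = 0 ∧ evenBasicFun s i j k = k + 1) ∨
    (k = j + (i - 2 * s) + 2 ∧ k % 2 = 1 ∧ evenBasicFun s i j k = j) ∨
    (j + (i - 2 * s) + 2 < k ∧ k % 2 = 1 ∧ evenBasicFun s i j k = k - 1) := by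
  unfold evenBasicFun
  split_ifs <;> repeat (first | (left; omega) | right)
  all_goals omega

section EvenBasic

variable {s i j : ℕ} (h₁ : 2 * s ≤ i) (h₂ : i < j) (h₃ : j + (i - 2 * s) + 2 ≤ m) (hm : Even m)
include h₁ h₂ h₃ hm

lemma evenBasicFun_lt : ∀ k < m, evenBasicFun s i j k < m := by
  obtain ⟨r, rfl⟩ := hm
  intro k hk
  have := evenBasicFun_cases s i j k
  omega

lemma evenBasicFun_evenBasicFun : ∀ k < m, evenBasicFun s i j (evenBasicFun s i j k) = k := by
  obtain ⟨r, rfl⟩ := hm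
  intro k hk
  have := evenBasicFun_cases s i j k
  have := evenBasicFun_cases s i j (evenBasicFun s i j k)
  omega

def evenBasic : Equiv.Perm (Fin m) :=
  involutionOfNat (evenBasicFun s i j) (evenBasicFun_lt h₁ h₂ h₃ hm)
    (evenBasicFun_evenBasicFun h₁ h₂ h₃ hm)

lemma isFPF_evenBasic : isFPF (evenBasic h₁ h₂ h₃ hm) :=
  isFPF_involutionOfNat fun k _ => by
    have := evenBasicFun_cases s i j k
    omega

lemma inSympDiag_evenBasic_iff {a b : Fin m} :
    inSympDiag (evenBasic h₁ h₂ h₃ hm) a b ↔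
      2 * s ≤ a.val ∧ a.val ≤ i ∧ a.val < b.val ∧ b.val ≤ j := by
  rw [evenBasic, inSympDiag_involutionOfNat_iff]
  have := evenBasicFun_cases s i j a
  have := evenBasicFun_cases s i j b
  omega

lemma sympEssBox_evenBasic_iff {a b : Fin m} :
    sympEssBox (evenBasic h₁ h₂ h₃ hm) a b ↔ a.val = i ∧ b.val = j := by
  simp only [sympEssBox, inSympDiag_evenBasic_iff]
  constructor
  · rintro ⟨hab, hsouth, heast⟩
    exact ⟨by_contra fun hai => hsouth (by omega) (by omega),
      by_contra fun hbj => heast (by omega) (by omega)⟩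
  · rintro ⟨hai, hbj⟩
    exact ⟨by omega, fun _ h => by omega, fun _ h => by omega⟩

lemma rk_evenBasic : rk (evenBasic h₁ h₂ h₃ hm) i j = 2 * s :=
  rk_involutionOfNat (by omega) fun k _ => by
    have := evenBasicFun_cases s i j k
    omega

end EvenBasic

/-- As `evenBasicFun`, except that row `2s` is paired with `i + 1`, so that only the rows
`2s + 1, …, i` go to the columns `j + 1, …, j + (i - 2s)`. -/
def oddBasicFun (s i j k : ℕ) : ℕ :=
  if k < 2 * s then (if k % 2 = 0 then k + 1 else k - 1)
  else if k = 2 * s then i + 1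
  else if k ≤ i then j + (k - 2 * s)
  else if k = i + 1 then 2 * s
  else if k ≤ j then
    (if (k + i) % 2 = 0 then (if k < j then k + 1 else j + (i - 2 * s) + 1) else k - 1)
  else if k ≤ j + (i - 2 * s) then 2 * s + (k - j)
  else if k % 2 = 0 then k + 1
  else if k = j + (i - 2 * s) + 1 then j else k - 1

lemma oddBasicFun_cases (s i j k : ℕ) :
    (k < 2 * s ∧ k % 2 = 0 ∧ oddBasicFun s i j k = k + 1) ∨
    (k < 2 * s ∧ k % 2 = 1 ∧ oddBasicFun s i j k = k - 1) ∨
    (k = 2 * s ∧ oddBasicFun s i j k = i + 1) ∨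
    (2 * s < k ∧ k ≤ i ∧ oddBasicFun s i j k = j + (k - 2 * s)) ∨
    (i < k ∧ k = i + 1 ∧ k ≠ 2 * s ∧ oddBasicFun s i j k = 2 * s) ∨
    (i + 1 < k ∧ k < j ∧ (k + i) % 2 = 0 ∧ oddBasicFun s i j k = k + 1) ∨
    (i + 1 < k ∧ k = j ∧ (k + i) % 2 = 0 ∧ oddBasicFun s i j k = j + (i - 2 * s) + 1) ∨
    (i + 1 < k ∧ k ≤ j ∧ (k + i) % 2 = 1 ∧ oddBasicFun s i j k = k - 1) ∨
    (j < k ∧ k ≤ j + (i - 2 * s) ∧ oddBasicFun s i j k = 2 * s + (k - j)) ∨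
    (j + (i - 2 * s) < k ∧ k % 2 = 0 ∧ oddBasicFun s i j k = k + 1) ∨
    (k = j + (i - 2 * s) + 1 ∧ k % 2 = 1 ∧ oddBasicFun s i j k = j) ∨
    (j + (i - 2 * s) + 1 < k ∧ k % 2 = 1 ∧ oddBasicFun s i j k = k - 1) := by
  unfold oddBasicFun
  split_ifs <;> repeat (first | (left; omega) | right)
  all_goals omega

section OddBasic

variable {s i j : ℕ} (h₁ : 2 * s < i) (h₂ : i + 2 ≤ j) (h₃ : j + (i - 2 * s) + 1 ≤ m)
  (hm : Even m)
include h₁ h₂ h₃ hm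

lemma oddBasicFun_lt : ∀ k < m, oddBasicFun s i j k < m := by
  obtain ⟨r, rfl⟩ := hm
  intro k hk
  have := oddBasicFun_cases s i j k
  omega

lemma oddBasicFun_oddBasicFun : ∀ k < m, oddBasicFun s i j (oddBasicFun s i j k) = k := by
  obtain ⟨r, rfl⟩ := hm
  intro k hk
  have := oddBasicFun_cases s i j k
  have := oddBasicFun_cases s i j (oddBasicFun s i j k)
  omega

def oddBasic : Equiv.Perm (Fin m) :=
  involutionOfNat (oddBasicFun s i j) (oddBasicFun_lt h₁ h₂ h₃ hm)
    (oddBasicFun_oddBasicFun h₁ h₂ h₃ hm)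

lemma isFPF_oddBasic : isFPF (oddBasic h₁ h₂ h₃ hm) :=
  isFPF_involutionOfNat fun k _ => by
    have := oddBasicFun_cases s i j k
    omega

lemma inSympDiag_oddBasic_iff {a b : Fin m} :
    inSympDiag (oddBasic h₁ h₂ h₃ hm) a b ↔
      (2 * s ≤ a.val ∧ a.val < b.val ∧ b.val ≤ i) ∨
        (2 * s < a.val ∧ a.val ≤ i ∧ i + 2 ≤ b.val ∧ b.val ≤ j) := by
  rw [oddBasic, inSympDiag_involutionOfNat_iff]
  have := oddBasicFun_cases s i j a
  have := oddBasicFun_cases s i j b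
  omega

lemma sympEssBox_oddBasic_iff {a b : Fin m} :
    sympEssBox (oddBasic h₁ h₂ h₃ hm) a b ↔
      (a.val + 1 = i ∧ b.val = i) ∨ (a.val = i ∧ b.val = j) := by
  simp only [sympEssBox, inSympDiag_oddBasic_iff]
  constructor
  · rintro ⟨hab, hsouth, heast⟩
    have hb : b.val = i ∨ b.val = j := by_contra fun hb => heast (by omega) (by omega)
    have ha : a.val + 1 = b.val ∨ a.val = i := by_contra fun ha => hsouth (by omega) (by omega)
    omega
  · intro hab
    exact ⟨by omega, fun _ h => by omega, fun _ h => by omega⟩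

lemma rk_oddBasic_pred : rk (oddBasic h₁ h₂ h₃ hm) (i - 1) i = 2 * s :=
  rk_involutionOfNat (by omega) fun k _ => by
    have := oddBasicFun_cases s i j k
    omega

lemma rk_oddBasic : rk (oddBasic h₁ h₂ h₃ hm) i j = 2 * s + 1 :=
  rk_involutionOfNat (by omega) fun k _ => by
    have := oddBasicFun_cases s i j k
    omega

end OddBasic

section BoxBounds

variable {ι : Equiv.Perm (Fin m)} {a b : Fin m}

lemma rk_le_of_inSympDiag (hι : Involutive ι) (h : inSympDiag ι a b) : rk ι a b ≤ a :=
  rk_le_of_lt_apply ι a.2 ((inSympDiag_iff hι).1 h).2.1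

lemma add_two_le_of_odd_rk (hι : isFPF ι) (h : inSympDiag ι a b) (hodd : Odd (rk ι a b)) :
    a.val + 2 ≤ b.val := by
  have hab := (inSympDiag_iff hι.involutive).1 h
  by_contra hlt
  have hbv : b.val = a.val + 1 := by omega
  have hfix : (ι b).val ≠ b.val := Fin.val_ne_of_ne (hι.2 b)
  have hstep := rk_succ_left ι (a.val + 1) (hbv ▸ b.2 : a.val + 1 < m)
  rw [show (⟨a.val + 1, _⟩ : Fin m) = b from Fin.ext hbv.symm, if_neg (by omega), add_zero,
    ← hbv] at hstep
  exact Nat.not_even_iff_odd.2 hodd (hstep ▸ even_rk_self hι _)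

lemma rk_pred_lt_of_odd_rk (hι : isFPF ι) (h : inSympDiag ι a b) (hodd : Odd (rk ι a b)) :
    rk ι (a.val - 1) a < rk ι a b := by
  have hab := (inSympDiag_iff hι.involutive).1 h
  have hpos : 0 < a.val := by
    have := rk_le_of_inSympDiag hι.involutive h
    obtain ⟨c, hc⟩ := hodd
    omega
  obtain ⟨a', ha'⟩ : ∃ a', a.val = a' + 1 := ⟨a.val - 1, by omega⟩
  have hstep := rk_succ_right hι.involutive a' (b := a') (ha' ▸ a.2)
  rw [show (⟨a' + 1, _⟩ : Fin m) = a from Fin.ext ha'.symm, if_neg (by omega), add_zero] at hstep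
  have hmono := rk_mono ι (show a' ≤ a.val by omega) (show a' + 1 ≤ b.val by omega)
  have hpred : rk ι (a.val - 1) a = rk ι a' a' := by rw [ha', Nat.add_sub_cancel, hstep]
  obtain ⟨c, hc⟩ := even_rk_self hι a'
  obtain ⟨d, hd⟩ := hodd
  omega

end BoxBounds

section BasicElements

variable {n : ℕ} {ι : Equiv.Perm (Fin (2 * n))} {a b : Fin (2 * n)}

lemma exists_memAe_of_rk_eq (hι : isFPF ι) (hbox : sympEssBox ι a b) {s : ℕ}
    (hs : rk ι a b = 2 * s) : ∃ ι', memAe ι' ∧ oppLE ι ι' ∧ rk ι' a b = rk ι a b := by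
  have hab := (inSympDiag_iff hι.involutive).1 hbox.1
  have hle := rk_le_of_inSympDiag hι.involutive hbox.1
  have hge := add_add_two_le_rk_add ι a.2 b.2
  have h₁ : 2 * s ≤ a.val := by omega
  have h₃ : b.val + (a.val - 2 * s) + 2 ≤ 2 * n := by omega
  have hm : Even (2 * n) := even_two_mul n
  have hess {c d : Fin (2 * n)} : sympEssBox (evenBasic h₁ hab.1 h₃ hm) c d ↔ c = a ∧ d = b := by
    rw [sympEssBox_evenBasic_iff, Fin.ext_iff, Fin.ext_iff]
  have hrk := rk_evenBasic h₁ hab.1 h₃ hm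
  refine ⟨evenBasic h₁ hab.1 h₃ hm, ⟨isFPF_evenBasic .., (a, b), hess.2 ⟨rfl, rfl⟩,
    ⟨s, by rw [rkm_eq_rk, hrk, two_mul]⟩, fun q hq => Prod.ext (hess.1 hq).1 (hess.1 hq).2⟩,
    oppLE_of_forall_sympEssBox hι (isFPF_evenBasic ..) fun c d hcd => ?_, by rw [hrk, hs]⟩
  obtain ⟨rfl, rfl⟩ := hess.1 hcd
  rw [rkm_eq_rk, rkm_eq_rk, hrk, hs]

lemma exists_memAo_of_rk_eq (hι : isFPF ι) (hbox : sympEssBox ι a b) {s : ℕ}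
    (hs : rk ι a b = 2 * s + 1) : ∃ ι', memAo ι' ∧ oppLE ι ι' ∧ rk ι' a b = rk ι a b := by
  have hodd : Odd (rk ι a b) := ⟨s, hs⟩
  have hle := rk_le_of_inSympDiag hι.involutive hbox.1
  have hge := add_add_two_le_rk_add ι a.2 b.2
  have hpred := rk_pred_lt_of_odd_rk hι hbox.1 hodd
  have h₁ : 2 * s < a.val := by omega
  have h₂ := add_two_le_of_odd_rk hι hbox.1 hodd
  have h₃ : b.val + (a.val - 2 * s) + 1 ≤ 2 * n := by omega
  have hm : Even (2 * n) := even_two_mul n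
  let a' : Fin (2 * n) := ⟨a.val - 1, by omega⟩
  have hess {c d : Fin (2 * n)} :
      sympEssBox (oddBasic h₁ h₂ h₃ hm) c d ↔ (c = a' ∧ d = a) ∨ (c = a ∧ d = b) := by
    rw [sympEssBox_oddBasic_iff, Fin.ext_iff, Fin.ext_iff, Fin.ext_iff, Fin.ext_iff]
    simp only [a']
    omega
  have hrk' := rk_oddBasic_pred h₁ h₂ h₃ hm
  have hrk := rk_oddBasic h₁ h₂ h₃ hm
  have hsucc : a.val = a'.val + 1 := by
    change a.val = a.val - 1 + 1
    omega
  refine ⟨oddBasic h₁ h₂ h₃ hm, ⟨isFPF_oddBasic .., (a', a), (a, b), s,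
    fun h => Fin.ne_of_val_ne (by omega : a.val ≠ b.val) (congrArg Prod.snd h), hess.2 (.inl ⟨rfl, rfl⟩),
    hess.2 (.inr ⟨rfl, rfl⟩), hsucc, hrk', hsucc, hrk, fun q hq => ?_⟩,
    oppLE_of_forall_sympEssBox hι (isFPF_oddBasic ..) fun c d hcd => ?_, by rw [hrk, hs]⟩
  · rcases hess.1 hq with ⟨h1, h2⟩ | ⟨h1, h2⟩
    · exact .inl (Prod.ext h1 h2)
    · exact .inr (Prod.ext h1 h2)
  · rcases hess.1 hcd with ⟨rfl, rfl⟩ | ⟨rfl, rfl⟩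
    · rw [rkm_eq_rk, rkm_eq_rk, hrk']
      exact Nat.lt_succ_iff.1 (hs ▸ hpred :)
    · rw [rkm_eq_rk, rkm_eq_rk, hrk, hs]

lemma exists_memA_oppLE_rkm_eq (hι : isFPF ι) (hbox : sympEssBox ι a b) :
    ∃ ι', memA ι' ∧ oppLE ι ι' ∧ rkm ι' a b = rkm ι a b := by
  obtain ⟨s, hs | hs⟩ := Nat.even_or_odd' (rk ι a b)
  · obtain ⟨ι', hA, hle, hrk⟩ := exists_memAe_of_rk_eq hι hbox hs
    exact ⟨ι', .inl hA, hle, hrk⟩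
  · obtain ⟨ι', hA, hle, hrk⟩ := exists_memAo_of_rk_eq hι hbox hs
    exact ⟨ι', .inr hA, hle, hrk⟩

end BasicElements

end SymplecticRank

/-- every fixed-point-free involution `ι` is the greatest lower bound,
in the opposite Bruhat order, of the set `S = {ι' ∈ 𝒜 : ι ⪯ ι'}`; in particular `𝒜`
contains the basic elements of the poset. -/
theorem A_contains_basic_elements {n : ℕ} (ι : Equiv.Perm (Fin (2*n))) (hι : isFPF ι) :
    (∀ ι' : Equiv.Perm (Fin (2*n)), memA ι' ∧ oppLE ι ι' → oppLE ι ι') ∧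
    (∀ τ : Equiv.Perm (Fin (2*n)), isFPF τ →
      (∀ ι' : Equiv.Perm (Fin (2*n)), memA ι' ∧ oppLE ι ι' → oppLE τ ι') →
      oppLE τ ι) := by
  refine ⟨fun ι' h => h.2, fun τ hτ hS =>
    SymplecticRank.oppLE_of_forall_sympEssBox hτ hι fun a b hbox => ?_⟩
  obtain ⟨ι', hA, hle, hrk⟩ := SymplecticRank.exists_memA_oppLE_rkm_eq hι hbox
  exact hrk ▸ hS ι' ⟨hA, hle⟩ a b
end

section
/- Let ι and ι' be fixed-point-free involutions of {1,…,2n}. Then ι ⪯ ι' in the opposite Bruhat order (i.e., r_{ij}(ι) ≤ r_{ij}(ι') for all i, j) if and only if r_{ij}(ι) ≤ r_{ij}(ι') for every symplectic essential box (i,j) of ι'. -/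
/- ## Auxiliary lemmas -/

lemma rkm_mono_row {m : ℕ} (π : Equiv.Perm (Fin m)) {i i' : Fin m} (j : Fin m)
    (h : i ≤ i') : rkm π i j ≤ rkm π i' j := by
  apply Finset.card_le_card
  intro k hk
  simp only [Finset.mem_filter, Finset.mem_univ, true_and] at hk ⊢
  exact ⟨le_trans hk.1 h, hk.2⟩

lemma rkm_mono_col {m : ℕ} (π : Equiv.Perm (Fin m)) (i : Fin m) {j j' : Fin m}
    (h : j ≤ j') : rkm π i j ≤ rkm π i j' := by
  apply Finset.card_le_card
  intro k hk
  simp only [Finset.mem_filter, Finset.mem_univ, true_and] at hk ⊢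
  exact ⟨hk.1, le_trans hk.2 h⟩

lemma rkm_row_step {m : ℕ} (π : Equiv.Perm (Fin m)) (i i' j : Fin m)
    (h : i'.val + 1 = i.val) :
    rkm π i j = rkm π i' j + (if π i ≤ j then 1 else 0) := by
  unfold rkm
  have hsplit : (Finset.univ.filter fun k : Fin m => k ≤ i ∧ π k ≤ j)
      = (Finset.univ.filter fun k : Fin m => k ≤ i' ∧ π k ≤ j)
        ∪ (Finset.univ.filter fun k : Fin m => k = i ∧ π k ≤ j) := by
    ext k
    simp only [Finset.mem_filter, Finset.mem_union, Finset.mem_univ, true_and]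
    constructor
    · rintro ⟨h1, h2⟩
      rcases eq_or_lt_of_le h1 with heq | hlt
      · exact Or.inr ⟨heq, h2⟩
      · refine Or.inl ⟨?_, h2⟩
        rw [Fin.le_def]; rw [Fin.lt_def] at hlt; omega
    · rintro (⟨h1, h2⟩ | ⟨h1, h2⟩)
      · refine ⟨?_, h2⟩
        rw [Fin.le_def] at h1 ⊢; omega
      · exact ⟨le_of_eq h1, h2⟩
  have hdisj : Disjoint (Finset.univ.filter fun k : Fin m => k ≤ i' ∧ π k ≤ j)
      (Finset.univ.filter fun k : Fin m => k = i ∧ π k ≤ j) := by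
    rw [Finset.disjoint_left]
    intro k hk hk'
    simp only [Finset.mem_filter, Finset.mem_univ, true_and] at hk hk'
    have := Fin.le_def.mp hk.1
    have : k.val = i.val := congrArg Fin.val hk'.1
    omega
  rw [hsplit, Finset.card_union_of_disjoint hdisj]
  congr 1
  by_cases hle : π i ≤ j
  · rw [if_pos hle]
    have : (Finset.univ.filter fun k : Fin m => k = i ∧ π k ≤ j) = {i} := by
      ext k
      simp only [Finset.mem_filter, Finset.mem_univ, true_and, Finset.mem_singleton]
      constructor
      · rintro ⟨rfl, _⟩; rfl
      · rintro rfl; exact ⟨rfl, hle⟩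
    rw [this, Finset.card_singleton]
  · rw [if_neg hle]
    have : (Finset.univ.filter fun k : Fin m => k = i ∧ π k ≤ j) = ∅ := by
      ext k
      simp only [Finset.mem_filter, Finset.mem_univ, true_and, Finset.notMem_empty,
        iff_false, not_and]
      rintro rfl; exact hle
    rw [this, Finset.card_empty]

lemma rkm_col_step {m : ℕ} (π : Equiv.Perm (Fin m)) (i j j' : Fin m)
    (h : j'.val + 1 = j.val) :
    rkm π i j = rkm π i j' + (if π⁻¹ j ≤ i then 1 else 0) := by
  unfold rkm
  have key : ∀ k : Fin m, π k = j ↔ k = π⁻¹ j := by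
    intro k
    constructor
    · rintro rfl; simp
    · rintro rfl; simp
  have hsplit : (Finset.univ.filter fun k : Fin m => k ≤ i ∧ π k ≤ j)
      = (Finset.univ.filter fun k : Fin m => k ≤ i ∧ π k ≤ j')
        ∪ (Finset.univ.filter fun k : Fin m => k ≤ i ∧ π k = j) := by
    ext k
    simp only [Finset.mem_filter, Finset.mem_union, Finset.mem_univ, true_and]
    constructor
    · rintro ⟨h1, h2⟩
      rcases eq_or_lt_of_le h2 with heq | hlt
      · exact Or.inr ⟨h1, heq⟩
      · refine Or.inl ⟨h1, ?_⟩
        rw [Fin.le_def]; rw [Fin.lt_def] at hlt; omega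
    · rintro (⟨h1, h2⟩ | ⟨h1, h2⟩)
      · refine ⟨h1, ?_⟩
        rw [Fin.le_def] at h2 ⊢; omega
      · exact ⟨h1, le_of_eq h2⟩
  have hdisj : Disjoint (Finset.univ.filter fun k : Fin m => k ≤ i ∧ π k ≤ j')
      (Finset.univ.filter fun k : Fin m => k ≤ i ∧ π k = j) := by
    rw [Finset.disjoint_left]
    intro k hk hk'
    simp only [Finset.mem_filter, Finset.mem_univ, true_and] at hk hk'
    have h1 := Fin.le_def.mp hk.2
    have h2 : (π k).val = j.val := congrArg Fin.val hk'.2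
    omega
  rw [hsplit, Finset.card_union_of_disjoint hdisj]
  congr 1
  by_cases hle : π⁻¹ j ≤ i
  · rw [if_pos hle]
    have : (Finset.univ.filter fun k : Fin m => k ≤ i ∧ π k = j) = {π⁻¹ j} := by
      ext k
      simp only [Finset.mem_filter, Finset.mem_univ, true_and, Finset.mem_singleton]
      constructor
      · rintro ⟨_, hk⟩; exact (key k).mp hk
      · rintro rfl; exact ⟨hle, by simp⟩
    rw [this, Finset.card_singleton]
  · rw [if_neg hle]
    have : (Finset.univ.filter fun k : Fin m => k ≤ i ∧ π k = j) = ∅ := by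
      ext k
      simp only [Finset.mem_filter, Finset.mem_univ, true_and, Finset.notMem_empty,
        iff_false, not_and]
      intro hk1 hk2
      exact hle ((key k).mp hk2 ▸ hk1)
    rw [this, Finset.card_empty]

lemma invol_apply_s8 {m : ℕ} {π : Equiv.Perm (Fin m)} (h : π * π = 1) (k : Fin m) :
    π (π k) = k := by
  have : (π * π) k = (1 : Equiv.Perm (Fin m)) k := by rw [h]
  simpa [Equiv.Perm.mul_apply] using this

lemma rkm_symm {m : ℕ} {π : Equiv.Perm (Fin m)} (h : π * π = 1) (i j : Fin m) :
    rkm π i j = rkm π j i := by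
  unfold rkm
  refine Finset.card_bij' (fun k _ => π k) (fun k _ => π k) ?_ ?_ ?_ ?_
  · intro k hk
    simp only [Finset.mem_filter, Finset.mem_univ, true_and] at hk ⊢
    exact ⟨hk.2, (invol_apply_s8 h k).symm ▸ hk.1⟩
  · intro k hk
    simp only [Finset.mem_filter, Finset.mem_univ, true_and] at hk ⊢
    exact ⟨hk.2, (invol_apply_s8 h k).symm ▸ hk.1⟩
  · intro k _; exact invol_apply_s8 h k
  · intro k _; exact invol_apply_s8 h k

lemma rkm_diag_even {m : ℕ} {π : Equiv.Perm (Fin m)} (hπ : isFPF π) (i : Fin m) :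
    Even (rkm π i i) := by
  obtain ⟨h1, h2⟩ := hπ
  unfold rkm
  set S := Finset.univ.filter fun k : Fin m => k ≤ i ∧ π k ≤ i with hS
  have hmem : ∀ k, k ∈ S ↔ (k ≤ i ∧ π k ≤ i) := by
    intro k; simp [hS]
  have hsplit : S = (S.filter fun k => k < π k) ∪ (S.filter fun k => π k < k) := by
    ext k
    simp only [Finset.mem_union, Finset.mem_filter]
    constructor
    · intro hk
      rcases lt_trichotomy k (π k) with h | h | h
      · exact Or.inl ⟨hk, h⟩
      · exact absurd h.symm (h2 k)
      · exact Or.inr ⟨hk, h⟩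
    · rintro (⟨hk, _⟩ | ⟨hk, _⟩) <;> exact hk
  have hdisj : Disjoint (S.filter fun k => k < π k) (S.filter fun k => π k < k) := by
    rw [Finset.disjoint_left]
    intro k hk hk'
    simp only [Finset.mem_filter] at hk hk'
    exact absurd (hk.2.trans hk'.2) (lt_irrefl k)
  have hcard : (S.filter fun k => k < π k).card = (S.filter fun k => π k < k).card := by
    refine Finset.card_bij' (fun k _ => π k) (fun k _ => π k) ?_ ?_ ?_ ?_
    · intro k hk
      simp only [Finset.mem_filter] at hk ⊢
      obtain ⟨hk1, hk2⟩ := hk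
      rw [hmem] at hk1 ⊢
      exact ⟨⟨hk1.2, (invol_apply_s8 h1 k).symm ▸ hk1.1⟩, (invol_apply_s8 h1 k).symm ▸ hk2⟩
    · intro k hk
      simp only [Finset.mem_filter] at hk ⊢
      obtain ⟨hk1, hk2⟩ := hk
      rw [hmem] at hk1 ⊢
      exact ⟨⟨hk1.2, (invol_apply_s8 h1 k).symm ▸ hk1.1⟩, (invol_apply_s8 h1 k).symm ▸ hk2⟩
    · intro k _; exact invol_apply_s8 h1 k
    · intro k _; exact invol_apply_s8 h1 k
  rw [hsplit, Finset.card_union_of_disjoint hdisj, ← hcard]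
  exact ⟨_, rfl⟩

lemma rkm_le_one_of_row0 {m : ℕ} (π : Equiv.Perm (Fin m)) (i j : Fin m)
    (hi : i.val = 0) : rkm π i j ≤ 1 := by
  have hsub : (Finset.univ.filter fun k : Fin m => k ≤ i ∧ π k ≤ j) ⊆ {i} := by
    intro k hk
    simp only [Finset.mem_filter, Finset.mem_univ, true_and] at hk
    have := Fin.le_def.mp hk.1
    simp only [Finset.mem_singleton]
    exact Fin.ext (by omega)
  calc rkm π i j ≤ ({i} : Finset (Fin m)).card := Finset.card_le_card hsub
    _ = 1 := Finset.card_singleton i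

lemma one_le_rkm {m : ℕ} (π : Equiv.Perm (Fin m)) (i j : Fin m) (h : π i ≤ j) :
    1 ≤ rkm π i j := by
  have : i ∈ Finset.univ.filter fun k : Fin m => k ≤ i ∧ π k ≤ j := by
    simp [le_refl, h]
  exact Finset.card_pos.mpr ⟨i, this⟩

lemma rkm_diag_zero {m : ℕ} {π : Equiv.Perm (Fin m)} (hπ : ∀ k, π k ≠ k)
    (i : Fin m) (hi : i.val = 0) : rkm π i i = 0 := by
  unfold rkm
  rw [Finset.card_eq_zero]
  ext k
  simp only [Finset.mem_filter, Finset.mem_univ, true_and, Finset.notMem_empty,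
    iff_false, not_and]
  intro hk1 hk2
  have h1 := Fin.le_def.mp hk1
  have h2 := Fin.le_def.mp hk2
  have hk : k = i := Fin.ext (by omega)
  subst hk
  exact hπ k (Fin.ext (by omega))

/-- Key propagation lemma: a rank violation with `i ≤ j` yields a rank violation at a
symplectic diagram cell of `σ`. -/
lemma to_symp {m : ℕ} {ι σ : Equiv.Perm (Fin m)} (hι : isFPF ι) (hσ : isFPF σ) :
    ∀ N : ℕ, ∀ i j : Fin m, i.val + j.val ≤ N → i ≤ j → rkm σ i j < rkm ι i j →
      ∃ a b : Fin m, inSympDiag σ a b ∧ rkm σ a b < rkm ι a b := by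
  intro N
  induction N with
  | zero =>
    intro i j hN hij hlt
    -- i.val = j.val = 0, so i = j and rkm's are 0
    have hi : i.val = 0 := by omega
    have hj : j.val = 0 := by omega
    have : i = j := Fin.ext (by omega)
    subst this
    rw [rkm_diag_zero hι.2 i hi, rkm_diag_zero hσ.2 i hi] at hlt
    omega
  | succ N IH =>
    intro i j hN hij hlt
    rcases eq_or_lt_of_le hij with heq | hij'
    · -- diagonal case
      subst heq
      have hi0 : 0 < i.val := by
        by_contra h0
        have hi : i.val = 0 := by omega
        rw [rkm_diag_zero hι.2 i hi, rkm_diag_zero hσ.2 i hi] at hlt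
        omega
      set i' : Fin m := ⟨i.val - 1, Nat.lt_of_le_of_lt (Nat.sub_le _ _) i.isLt⟩ with hi'
      have hstep : i'.val + 1 = i.val := by simp only [hi']; omega
      have hevι := rkm_diag_even hι i
      have hevσ := rkm_diag_even hσ i
      obtain ⟨a, ha⟩ := hevι
      obtain ⟨b, hb⟩ := hevσ
      have h2 : rkm σ i i + 2 ≤ rkm ι i i := by omega
      have hrow : rkm ι i i ≤ rkm ι i' i + 1 := by
        rw [rkm_row_step ι i i' i hstep]
        split <;> omega
      have hmono : rkm σ i' i ≤ rkm σ i i :=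
        rkm_mono_row σ i (Fin.le_def.mpr (by omega))
      have hlt' : rkm σ i' i < rkm ι i' i := by omega
      exact IH i' i (by simp only [hi']; omega) (Fin.le_def.mpr (by simp only [hi']; omega)) hlt'
    · by_cases hd : inSympDiag σ i j
      · exact ⟨i, j, hd, hlt⟩
      · by_cases hrow : σ i ≤ j
        · -- move up
          have hi0 : 0 < i.val := by
            by_contra h0
            have hi : i.val = 0 := by omega
            have h1 := one_le_rkm σ i j hrow
            have h2 := rkm_le_one_of_row0 ι i j hi
            omega
          set i' : Fin m := ⟨i.val - 1, Nat.lt_of_le_of_lt (Nat.sub_le _ _) i.isLt⟩ with hi'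
          have hstep : i'.val + 1 = i.val := by simp only [hi']; omega
          have hσeq : rkm σ i j = rkm σ i' j + 1 := by
            rw [rkm_row_step σ i i' j hstep, if_pos hrow]
          have hιle : rkm ι i j ≤ rkm ι i' j + 1 := by
            rw [rkm_row_step ι i i' j hstep]
            split <;> omega
          have hlt' : rkm σ i' j < rkm ι i' j := by omega
          have hij2 : i' ≤ j := Fin.le_def.mpr (by
            have := Fin.lt_def.mp hij'
            simp only [hi']; omega)
          exact IH i' j (by simp only [hi']; omega) hij2 hlt'
        · -- then σ⁻¹ j ≤ i, move left
          have hcol : σ⁻¹ j ≤ i := by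
            by_contra hc
            exact hd ⟨hij', not_le.mp hrow, not_le.mp hc⟩
          have hj0 : 0 < j.val := by
            have := Fin.lt_def.mp hij'
            omega
          set j' : Fin m := ⟨j.val - 1, Nat.lt_of_le_of_lt (Nat.sub_le _ _) j.isLt⟩ with hj'
          have hstep : j'.val + 1 = j.val := by simp only [hj']; omega
          have hσeq : rkm σ i j = rkm σ i j' + 1 := by
            rw [rkm_col_step σ i j j' hstep, if_pos hcol]
          have hιle : rkm ι i j ≤ rkm ι i j' + 1 := by
            rw [rkm_col_step ι i j j' hstep]
            split <;> omega
          have hlt' : rkm σ i j' < rkm ι i j' := by omega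
          have hij2 : i ≤ j' := Fin.le_def.mpr (by
            have := Fin.lt_def.mp hij'
            simp only [hj']; omega)
          exact IH i j' (by simp only [hj']; omega) hij2 hlt'

/-- From a rank violation at a symplectic diagram cell one reaches a symplectic
essential box (moving south/east within the symplectic diagram). -/
lemma to_ess {m : ℕ} {ι σ : Equiv.Perm (Fin m)} :
    ∀ N : ℕ, ∀ i j : Fin m, 2 * m - (i.val + j.val) ≤ N → inSympDiag σ i j →
      rkm σ i j < rkm ι i j →
      ∃ a b : Fin m, sympEssBox σ a b ∧ rkm σ a b < rkm ι a b := by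
  intro N
  induction N with
  | zero =>
    intro i j hN _ _
    have := i.isLt
    have := j.isLt
    omega
  | succ N IH =>
    intro i j hN hd hlt
    by_cases hs : ∃ h : i.val + 1 < m, inSympDiag σ ⟨i.val + 1, h⟩ j
    · obtain ⟨hb, hsd⟩ := hs
      set i₁ : Fin m := ⟨i.val + 1, hb⟩ with hi₁
      have hstep : i.val + 1 = i₁.val := by simp [hi₁]
      have hσeq : rkm σ i₁ j = rkm σ i j := by
        rw [rkm_row_step σ i₁ i j hstep, if_neg (not_le.mpr hsd.2.1)]
        omega
      have hιge : rkm ι i j ≤ rkm ι i₁ j :=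
        rkm_mono_row ι j (Fin.le_def.mpr (by simp only [hi₁]; omega))
      have hlt' : rkm σ i₁ j < rkm ι i₁ j := by omega
      refine IH i₁ j ?_ hsd hlt'
      have := j.isLt
      simp only [hi₁]; omega
    · by_cases he : ∃ h : j.val + 1 < m, inSympDiag σ i ⟨j.val + 1, h⟩
      · obtain ⟨hb, hed⟩ := he
        set j₁ : Fin m := ⟨j.val + 1, hb⟩ with hj₁
        have hstep : j.val + 1 = j₁.val := by simp [hj₁]
        have hσeq : rkm σ i j₁ = rkm σ i j := by
          rw [rkm_col_step σ i j₁ j hstep, if_neg (not_le.mpr hed.2.2)]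
          omega
        have hιge : rkm ι i j ≤ rkm ι i j₁ :=
          rkm_mono_col ι i (Fin.le_def.mpr (by simp only [hj₁]; omega))
        have hlt' : rkm σ i j₁ < rkm ι i j₁ := by omega
        refine IH i j₁ ?_ hed hlt'
        have := i.isLt
        simp only [hj₁]; omega
      · refine ⟨i, j, ⟨hd, ?_, ?_⟩, hlt⟩
        · intro h hcd; exact hs ⟨h, hcd⟩
        · intro h hcd; exact he ⟨h, hcd⟩

/-- for fixed-point-free involutions, `ι ⪯ ι'` in the opposite Bruhat
order iff the rank inequalities hold at the symplectic essential boxes of `ι'`. -/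
theorem oppLE_iff_essential {n : ℕ} (ι ι' : Equiv.Perm (Fin (2*n)))
    (hι : isFPF ι) (hι' : isFPF ι') :
    oppLE ι ι' ↔
      ∀ i j : Fin (2*n), sympEssBox ι' i j → rkm ι i j ≤ rkm ι' i j := by
  constructor
  · intro h i j _
    exact h i j
  · intro h i j
    by_contra hc
    push_neg at hc
    obtain ⟨a, b, hab, hlt⟩ : ∃ a b : Fin (2*n), a ≤ b ∧ rkm ι' a b < rkm ι a b := by
      rcases le_total i j with hij | hij
      · exact ⟨i, j, hij, hc⟩
      · refine ⟨j, i, hij, ?_⟩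
        rw [rkm_symm hι'.1 j i, rkm_symm hι.1 j i]
        exact hc
    obtain ⟨c, d, hd, hlt2⟩ := to_symp hι hι' (a.val + b.val) a b le_rfl hab hlt
    obtain ⟨e, f, hess, hlt3⟩ := to_ess (ι := ι) (σ := ι') (2 * (2*n)) c d
      (Nat.sub_le _ _) hd hlt2
    exact absurd (h e f hess) (not_le.mpr hlt3)
end

section
/- Let π be a permutation of {1,…,m}, let K be a field, and let A be an m×m matrix over K. Then rank(A_{[i],[j]}) ≤ r_{ij}(π) for all 1 ≤ i, j ≤ m if and only if rank(A_{[i],[j]}) ≤ r_{ij}(π) for every essential box (i,j) of π, where A_{[i],[j]} denotes the northwest i×j submatrix of A consisting of rows 1,…,i and columns 1,…,j. -/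
/-- `(i,j)` is a cell of the Rothe diagram of `π`. -/
def rotheDiag {m : ℕ} (π : Equiv.Perm (Fin m)) (i j : Fin m) : Prop :=
  j < π i ∧ i < π⁻¹ j

/-- An essential box: a Rothe diagram cell with no diagram cell immediately south
or east of it. -/
def essBox {m : ℕ} (π : Equiv.Perm (Fin m)) (i j : Fin m) : Prop :=
  rotheDiag π i j ∧
  (∀ h : i.val + 1 < m, ¬ rotheDiag π ⟨i.val+1, h⟩ j) ∧
  (∀ h : j.val + 1 < m, ¬ rotheDiag π i ⟨j.val+1, h⟩)

/-- The rank of the northwest `(i+1) × (j+1)` submatrix of `A` (0-based indices). -/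
noncomputable def nwRank {m : ℕ} {K : Type*} [Field K] (A : Matrix (Fin m) (Fin m) K)
    (i j : Fin m) : ℕ :=
  (A.submatrix (Fin.castLE i.isLt : Fin (i.val+1) → Fin m) (Fin.castLE j.isLt)).rank

open Matrix Module Submodule

theorem Matrix.rank_le_rank_submatrix_add_one {K m m₀ n : Type*} [Field K] [Fintype m]
    [Fintype m₀] [Fintype n] (B : Matrix m n K) (r : m₀ → m) (i₀ : m)
    (hr : ∀ i, i ≠ i₀ → i ∈ Set.range r) :
    B.rank ≤ (B.submatrix r id).rank + 1 := by
  rw [rank_eq_finrank_span_row, rank_eq_finrank_span_row]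
  set V := span K (Set.range (B.submatrix r id).row)
  have hrows : Set.range B.row ⊆ (V ⊔ span K {B.row i₀} : Submodule K (n → K)) := by
    rintro _ ⟨i, rfl⟩
    by_cases hi : i = i₀
    · exact mem_sup_right (subset_span (by rw [hi]; rfl))
    · obtain ⟨k, rfl⟩ := hr i hi
      exact mem_sup_left (subset_span ⟨k, rfl⟩)
  calc finrank K (span K (Set.range B.row))
      ≤ finrank K (V ⊔ span K {B.row i₀} : Submodule K (n → K)) :=
        finrank_mono (span_le.mpr hrows)
    _ ≤ finrank K V + finrank K (span K {B.row i₀}) := finrank_add_le_finrank_add_finrank _ _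
    _ ≤ finrank K V + 1 := by grw [finrank_span_le_card ({B.row i₀} : Set (n → K))]; simp

section RankMatrix

variable {m : ℕ} (π : Equiv.Perm (Fin m))

theorem rkm_pos {i j : Fin m} (k : Fin m) (hk : k ≤ i) (hπk : π k ≤ j) : 0 < rkm π i j :=
  Finset.card_pos.mpr ⟨k, by simp [hk, hπk]⟩

theorem rkm_inv (i j : Fin m) : rkm π⁻¹ j i = rkm π i j :=
  Finset.card_equiv π.symm fun l => by simp [and_comm]

theorem rkm_succ_row {i i' : Fin m} (h : i'.val = i.val + 1) (j : Fin m) :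
    rkm π i' j = rkm π i j + if π i' ≤ j then 1 else 0 := by
  have hle (k : Fin m) : k ≤ i' ↔ k ≤ i ∨ k = i' := by
    simp only [Fin.le_iff_val_le_val, Fin.ext_iff]; omega
  have hdisj : Disjoint (Finset.univ.filter fun k => k ≤ i ∧ π k ≤ j)
      (Finset.univ.filter fun k => k = i' ∧ π k ≤ j) := by
    simp only [Finset.disjoint_filter, Finset.mem_univ, true_implies]
    rintro k ⟨hk, -⟩ ⟨rfl, -⟩
    simp only [Fin.le_iff_val_le_val] at hk; omega
  simp only [rkm, hle, or_and_right, Finset.filter_or, Finset.card_union_of_disjoint hdisj]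
  congr 1
  split_ifs with hπ <;>
    simp [← Finset.filter_filter, Finset.filter_eq', Finset.filter_singleton, hπ]

theorem rkm_succ_col (i : Fin m) {j j' : Fin m} (h : j'.val = j.val + 1) :
    rkm π i j' = rkm π i j + if π⁻¹ j' ≤ i then 1 else 0 := by
  rw [← rkm_inv, ← rkm_inv π i j, rkm_succ_row π⁻¹ h]

end RankMatrix

section NorthwestRank

variable {m : ℕ} {K : Type*} [Field K] (A : Matrix (Fin m) (Fin m) K)

theorem nwRank_transpose (i j : Fin m) : nwRank Aᵀ j i = nwRank A i j := by
  rw [nwRank, ← Matrix.rank_transpose]; rfl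

theorem nwRank_mono {i i' j j' : Fin m} (hi : i ≤ i') (hj : j ≤ j') :
    nwRank A i j ≤ nwRank A i' j' :=
  Matrix.rank_submatrix_le
    (A.submatrix (Fin.castLE i'.isLt : Fin (i'.val+1) → Fin m) (Fin.castLE j'.isLt))
    (Fin.castLE (Nat.succ_le_succ hi)) (Fin.castLE (Nat.succ_le_succ hj))

theorem nwRank_succ_row_le {i i' : Fin m} (h : i'.val = i.val + 1) (j : Fin m) :
    nwRank A i' j ≤ nwRank A i j + 1 :=
  Matrix.rank_le_rank_submatrix_add_one
    (A.submatrix (Fin.castLE i'.isLt : Fin (i'.val+1) → Fin m) (Fin.castLE j.isLt))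
    (Fin.castLE (by omega)) (Fin.last _) fun k hk =>
      ⟨⟨k, by have := Fin.val_lt_last hk; omega⟩, rfl⟩

theorem nwRank_succ_col_le (i : Fin m) {j j' : Fin m} (h : j'.val = j.val + 1) :
    nwRank A i j' ≤ nwRank A i j + 1 := by
  simpa only [nwRank_transpose] using nwRank_succ_row_le Aᵀ h i

end NorthwestRank

section EssentialBoxes

variable {m : ℕ} {K : Type*} [Field K] {π : Equiv.Perm (Fin m)} {A : Matrix (Fin m) (Fin m) K}

theorem nwRank_le_rkm_of_rotheDiag (hess : ∀ i j, essBox π i j → nwRank A i j ≤ rkm π i j)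
    (i j : Fin m) (hD : rotheDiag π i j) : nwRank A i j ≤ rkm π i j := by
  by_cases hSouth : ∃ h : i.val + 1 < m, rotheDiag π ⟨i.val + 1, h⟩ j
  · obtain ⟨h, hD'⟩ := hSouth
    calc nwRank A i j ≤ nwRank A ⟨i.val + 1, h⟩ j :=
          nwRank_mono A (Fin.le_iff_val_le_val.mpr (Nat.le_succ _)) le_rfl
      _ ≤ rkm π ⟨i.val + 1, h⟩ j := nwRank_le_rkm_of_rotheDiag hess _ _ hD'
      _ = rkm π i j := by
          rw [rkm_succ_row π (i' := ⟨i.val + 1, h⟩) rfl, if_neg (not_le.mpr hD'.1), add_zero]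
  by_cases hEast : ∃ h : j.val + 1 < m, rotheDiag π i ⟨j.val + 1, h⟩
  · obtain ⟨h, hD'⟩ := hEast
    calc nwRank A i j ≤ nwRank A i ⟨j.val + 1, h⟩ :=
          nwRank_mono A le_rfl (Fin.le_iff_val_le_val.mpr (Nat.le_succ _))
      _ ≤ rkm π i ⟨j.val + 1, h⟩ := nwRank_le_rkm_of_rotheDiag hess _ _ hD'
      _ = rkm π i j := by
          rw [rkm_succ_col π i (j' := ⟨j.val + 1, h⟩) rfl, if_neg (not_le.mpr hD'.2), add_zero]
  exact hess i j ⟨hD, fun h hD' => hSouth ⟨h, hD'⟩, fun h hD' => hEast ⟨h, hD'⟩⟩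
termination_by 2 * m - i.val - j.val

theorem nwRank_le_rkm_of_essBox (hess : ∀ i j, essBox π i j → nwRank A i j ≤ rkm π i j)
    (i j : Fin m) : nwRank A i j ≤ rkm π i j := by
  by_cases hD : rotheDiag π i j
  · exact nwRank_le_rkm_of_rotheDiag hess i j hD
  rcases not_and_or.mp hD with hπ | hπ <;> rw [not_lt] at hπ
  · by_cases hi : i.val = 0
    · calc nwRank A i j ≤ i.val + 1 := rank_le_height _
        _ ≤ rkm π i j := by rw [hi]; exact rkm_pos π i le_rfl hπ
    set i' : Fin m := ⟨i.val - 1, by omega⟩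
    have h : i.val = i'.val + 1 := by simp only [i']; omega
    calc nwRank A i j ≤ nwRank A i' j + 1 := nwRank_succ_row_le A h j
      _ ≤ rkm π i' j + 1 := by grw [nwRank_le_rkm_of_essBox hess i' j]
      _ = rkm π i j := by rw [rkm_succ_row π h, if_pos hπ]
  · by_cases hj : j.val = 0
    · calc nwRank A i j ≤ j.val + 1 := rank_le_width _
        _ ≤ rkm π i j := by rw [hj]; exact rkm_pos π _ hπ (by simp)
    set j' : Fin m := ⟨j.val - 1, by omega⟩
    have h : j.val = j'.val + 1 := by simp only [j']; omega
    calc nwRank A i j ≤ nwRank A i j' + 1 := nwRank_succ_col_le A i h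
      _ ≤ rkm π i j' + 1 := by grw [nwRank_le_rkm_of_essBox hess i j']
      _ = rkm π i j := by rw [rkm_succ_col π i h, if_pos hπ]
termination_by i.val + j.val

end EssentialBoxes

/-- Fulton: the northwest rank conditions of a permutation hold
everywhere iff they hold at the essential boxes. -/
theorem rank_conditions_iff_essential {m : ℕ} {K : Type*} [Field K]
    (π : Equiv.Perm (Fin m)) (A : Matrix (Fin m) (Fin m) K) :
    (∀ i j : Fin m, nwRank A i j ≤ rkm π i j) ↔
      (∀ i j : Fin m, essBox π i j → nwRank A i j ≤ rkm π i j) :=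
  ⟨fun h i j _ => h i j, nwRank_le_rkm_of_essBox⟩
end

section
/- Let A be an invertible antisymmetric 2n×2n complex matrix (Aᵀ = −A). Then there exist an invertible lower triangular 2n×2n complex matrix b and a fixed-point-free involution ι of {1,…,2n} such that A = b S_ι bᵀ, where S_ι is the antisymmetric matrix with (S_ι)_{i,ι(i)} = 1 if i < ι(i), (S_ι)_{i,ι(i)} = −1 if i > ι(i), and all other entries 0. Moreover the involution ι is uniquely determined by A. (This realizes the correspondence between Sp_n orbits on the flag manifold, equivalently B₋-congruence orbits on invertible antisymmetric matrices via M ↦ MJMᵀ, and fixed-point-free involutions.) -/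
open Matrix

/-- The antisymmetric permutation-like matrix `S_ι` of a fixed-point-free involution:
`(S_ι)_{i, ι(i)} = 1` if `i < ι(i)`, `-1` if `i > ι(i)`, all other entries `0`. -/
def Smat {m : ℕ} (ι : Equiv.Perm (Fin m)) : Matrix (Fin m) (Fin m) ℂ :=
  Matrix.of fun i j => if ι i = j then (if i < j then (1:ℂ) else -1) else 0

/-!
Existence is a symplectic Gram–Schmidt process run along the top-left corners. Suppose the
`p × p` corner of `B` already equals that of `S_ι`, for an involution `ι` of `{0, …, p - 1}`.
Adding multiples of earlier rows to row `p` (and of earlier columns to column `p`) clears the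
entries of column `p` in the rows of paired indices. If column `p` then vanishes on the corner,
`p` stays fixed; otherwise its topmost nonzero entry `j₀` (a fixed point of `ι`) clears the
entries below it, is scaled to `1`, and `j₀` is paired with `p`. When `B` is invertible no index
stays fixed.

Uniqueness: a lower triangular congruence preserves the rank of every top-left `p × q` corner, and
for `S_ι` this rank is the number of non-fixed `k < p` with `ι k < q`, which determines `ι`.
-/

open Equiv Function

section Antisymmetric

variable {K : Type*} [Field K] {n : Type*}

theorem eq_zero_of_eq_neg [NeZero (2 : K)] {a : K} (h : a = -a) : a = 0 := by
  have : (2 : K) * a = 0 := by linear_combination h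
  simpa [two_ne_zero] using this

theorem apply_eq_neg_of_transpose_eq_neg {B : Matrix n n K} (hB : Bᵀ = -B) (i j : n) :
    B j i = -B i j := by
  simpa using congr_fun (congr_fun hB i) j

theorem diag_eq_zero_of_transpose_eq_neg [NeZero (2 : K)] {B : Matrix n n K} (hB : Bᵀ = -B)
    (i : n) : B i i = 0 :=
  eq_zero_of_eq_neg (apply_eq_neg_of_transpose_eq_neg hB i i)

theorem dotProduct_mulVec_self_eq_zero [NeZero (2 : K)] [Fintype n] {B : Matrix n n K}
    (hB : Bᵀ = -B) (v : n → K) : v ⬝ᵥ B *ᵥ v = 0 := by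
  apply eq_zero_of_eq_neg
  calc v ⬝ᵥ B *ᵥ v = Bᵀ *ᵥ v ⬝ᵥ v := by rw [dotProduct_mulVec, mulVec_transpose]
    _ = -(v ⬝ᵥ B *ᵥ v) := by rw [hB, neg_mulVec, neg_dotProduct, dotProduct_comm]

end Antisymmetric

section Pairing

variable (R : Type*) [Ring R] {n : Type*} [LinearOrder n]

/-- The paper's `S_ι`, extended by zero rows and columns at the fixed points of `ι`. -/
def pairingMatrix (ι : Perm n) : Matrix n n R :=
  of fun i j => if ι i = j ∧ i ≠ j then (if i < j then 1 else -1) else 0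

variable {R} {ι : Perm n}

theorem pairingMatrix_apply_of_ne {i j : n} (h : ι i ≠ j) : pairingMatrix R ι i j = 0 := by
  simp [pairingMatrix, h]

theorem pairingMatrix_apply_of_fixed_left {i : n} (hi : ι i = i) (j : n) :
    pairingMatrix R ι i j = 0 := by
  by_cases h : i = j <;> simp [pairingMatrix, hi, h]

theorem pairingMatrix_apply_of_fixed_right {j : n} (hj : ι j = j) (i : n) :
    pairingMatrix R ι i j = 0 := by
  by_cases h : i = j
  · exact pairingMatrix_apply_of_fixed_left (h ▸ hj) j
  · exact pairingMatrix_apply_of_ne fun hij => h (ι.injective (hij.trans hj.symm))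

theorem pairingMatrix_apply_eq_ite (i j : n) :
    pairingMatrix R ι i j = if ι i = j then pairingMatrix R ι i (ι i) else 0 := by
  by_cases h : ι i = j
  · rw [if_pos h, h]
  · rw [if_neg h, pairingMatrix_apply_of_ne h]

theorem pairingMatrix_apply_congr {ι' : Perm n} {i : n} (h : ι i = ι' i) (j : n) :
    pairingMatrix R ι i j = pairingMatrix R ι' i j := by
  simp [pairingMatrix, h]

theorem pairingMatrix_apply_mul_self (i : n) :
    pairingMatrix R ι i (ι i) * pairingMatrix R ι i (ι i) = if ι i = i then 0 else 1 := by
  by_cases h : ι i = i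
  · simp [pairingMatrix, h]
  · by_cases h' : i < ι i <;> simp [pairingMatrix, h, Ne.symm h, h']

theorem swap_mul_apply_of_ne {a b i : n} (ha : ι a = a) (hb : ι b = b) (hia : i ≠ a)
    (hib : i ≠ b) : (swap a b * ι) i = ι i := by
  rw [Perm.mul_apply, swap_apply_of_ne_of_ne]
  · exact fun h => hia (ι.injective (h.trans ha.symm))
  · exact fun h => hib (ι.injective (h.trans hb.symm))

theorem involutive_swap_mul {a b : n} (hι : Involutive ι) (ha : ι a = a) (hb : ι b = b) :
    Involutive (swap a b * ι) := fun x => by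
  by_cases hxa : x = a
  · simp [hxa, ha, hb]
  by_cases hxb : x = b
  · simp [hxb, ha, hb]
  have hιxa : ι x ≠ a := fun h => hxa (ι.injective (h.trans ha.symm))
  have hιxb : ι x ≠ b := fun h => hxb (ι.injective (h.trans hb.symm))
  rw [swap_mul_apply_of_ne ha hb hxa hxb, swap_mul_apply_of_ne ha hb hιxa hιxb, hι x]

theorem pairingMatrix_swap_mul {a b : n} (ha : ι a = a) (hb : ι b = b) (hab : a < b) :
    pairingMatrix R (swap a b * ι) = pairingMatrix R ι + (single a b 1 - single b a 1) := by
  ext i j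
  simp only [Matrix.add_apply, Matrix.sub_apply, single_apply]
  by_cases hia : i = a
  · subst hia
    rcases eq_or_ne j b with rfl | hj
    · simp [pairingMatrix, ha, hab, hab.ne]
    · simp [pairingMatrix, ha, hj.symm, hab.ne']
  by_cases hib : i = b
  · subst hib
    rcases eq_or_ne j a with rfl | hj
    · simp [pairingMatrix, hb, hab.ne', not_lt_of_gt hab]
    · simp [pairingMatrix, hb, hj.symm, hab.ne]
  rw [pairingMatrix_apply_congr (swap_mul_apply_of_ne ha hb hia hib)]
  simp [Ne.symm hia, Ne.symm hib]

theorem Smat_eq_pairingMatrix {m : ℕ} {ι : Perm (Fin m)} (hι : ∀ i, ι i ≠ i) :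
    Smat ι = pairingMatrix ℂ ι := by
  ext i j
  by_cases h : ι i = j
  · simp [Smat, pairingMatrix, h, show i ≠ j from fun hij => hι i (hij ▸ h)]
  · simp [Smat, pairingMatrix, h]

end Pairing

section LowerCongr

variable {K : Type*} [Field K] {n : Type*} [Fintype n] [LinearOrder n]

def LowerCongr (A B : Matrix n n K) : Prop :=
  ∃ L : Matrix n n K, IsUnit L ∧ L.IsLowerTriangular ∧ B = L * A * Lᵀ

namespace LowerCongr

variable {A B C : Matrix n n K}

theorem refl (A : Matrix n n K) : LowerCongr A A :=
  ⟨1, isUnit_one, blockTriangular_one, by simp⟩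

theorem trans (hAB : LowerCongr A B) (hBC : LowerCongr B C) : LowerCongr A C := by
  obtain ⟨L, hL, hLl, rfl⟩ := hAB
  obtain ⟨M, hM, hMl, rfl⟩ := hBC
  exact ⟨M * L, hM.mul hL, hMl.mul hLl, by simp only [transpose_mul, Matrix.mul_assoc]⟩

theorem symm (h : LowerCongr A B) : LowerCongr B A := by
  obtain ⟨L, hL, hLl, rfl⟩ := h
  have := hL.invertible
  refine ⟨L⁻¹, isUnit_nonsing_inv_iff.mpr hL, blockTriangular_inv_of_blockTriangular hLl, ?_⟩
  have := ((isUnit_transpose L).mpr hL).invertible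
  rw [transpose_nonsing_inv, Matrix.mul_assoc, mul_inv_cancel_right_of_invertible,
    inv_mul_cancel_left_of_invertible]

theorem isUnit (h : LowerCongr A B) (hA : IsUnit A) : IsUnit B := by
  obtain ⟨L, hL, -, rfl⟩ := h
  exact (hL.mul hA).mul ((isUnit_transpose L).mpr hL)

theorem transpose_eq_neg (h : LowerCongr A B) (hA : Aᵀ = -A) : Bᵀ = -B := by
  obtain ⟨L, -, -, rfl⟩ := h
  simp [transpose_mul, hA, Matrix.mul_assoc]

end LowerCongr

theorem lowerCongr_add_vecMulVec [NeZero (2 : K)] {B : Matrix n n K} (hB : Bᵀ = -B)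
    {u v : n → K} (huv : ∀ a b, u a ≠ 0 → v b ≠ 0 → b < a) :
    LowerCongr B (B + vecMulVec u (v ᵥ* B) + vecMulVec (B *ᵥ v) u) := by
  have hN : ∀ a b, ¬ b < a → u a * v b = 0 := fun a b hab => by
    by_contra h
    exact hab (huv a b (left_ne_zero_of_mul h) (right_ne_zero_of_mul h))
  have hl : (1 + vecMulVec u v).IsLowerTriangular := fun a b (hab : a < b) => by
    simp [one_apply_ne hab.ne, vecMulVec_apply, hN a b (not_lt_of_gt hab)]
  refine ⟨1 + vecMulVec u v, ?_, hl, ?_⟩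
  · rw [isUnit_iff_isUnit_det, det_of_isLowerTriangular _ hl]
    simp [vecMulVec_apply, hN _ _ (lt_irrefl _)]
  · have expand : (1 + vecMulVec u v) * B * (1 + vecMulVec u v)ᵀ
        = B + vecMulVec u v * B + B * vecMulVec v u + vecMulVec u v * B * vecMulVec v u := by
      rw [transpose_add, transpose_one, transpose_vecMulVec]; noncomm_ring
    rw [expand, vecMulVec_mul, mul_vecMulVec, vecMulVec_mul_vecMulVec, ← dotProduct_mulVec,
      dotProduct_mulVec_self_eq_zero hB, zero_smul, vecMulVec_zero, add_zero]

theorem lowerCongr_diagonal {d : n → K} (hd : ∀ i, d i ≠ 0) (B : Matrix n n K) :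
    LowerCongr B (of fun i j => d i * B i j * d j) := by
  refine ⟨diagonal d, ?_, blockTriangular_diagonal d, ?_⟩
  · simp [isUnit_iff_isUnit_det, Finset.prod_ne_zero_iff, hd]
  · ext i j
    simp [diagonal_transpose, diagonal_mul, mul_diagonal]

theorem diag_ne_zero_of_isLowerTriangular {L : Matrix n n K} (hl : L.IsLowerTriangular)
    (hL : IsUnit L) (i : n) : L i i ≠ 0 := by
  rw [isUnit_iff_isUnit_det, det_of_isLowerTriangular _ hl, isUnit_iff_ne_zero,
    Finset.prod_ne_zero_iff] at hL
  exact hL i (Finset.mem_univ i)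

end LowerCongr

section Corner

variable {K : Type*} [Field K] {m : ℕ}

def corner {α : Type*} (M : Matrix (Fin m) (Fin m) α) (p q : ℕ) :
    Matrix {i : Fin m // (i : ℕ) < p} {j : Fin m // (j : ℕ) < q} α :=
  M.submatrix Subtype.val Subtype.val

theorem corner_transpose {α : Type*} (M : Matrix (Fin m) (Fin m) α) (p q : ℕ) :
    corner Mᵀ p q = (corner M q p)ᵀ :=
  rfl

theorem corner_mul_of_isLowerTriangular {L : Matrix (Fin m) (Fin m) K}
    (hL : L.IsLowerTriangular) (M : Matrix (Fin m) (Fin m) K) (p q : ℕ) :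
    corner (L * M) p q = corner L p p * corner M p q := by
  ext i j
  simp only [corner, submatrix_apply, mul_apply]
  rw [← Finset.sum_subtype (Finset.univ.filter fun k : Fin m => (k : ℕ) < p) (by simp)
    (fun k => L i k * M k j), Finset.sum_filter_of_ne]
  intro k _ hk
  by_contra hkp
  exact hk (by rw [hL (show i.1 < k by omega), zero_mul])

theorem corner_mul_mul_transpose {L : Matrix (Fin m) (Fin m) K} (hL : L.IsLowerTriangular)
    (A : Matrix (Fin m) (Fin m) K) (p q : ℕ) :
    corner (L * A * Lᵀ) p q = corner L p p * corner A p q * (corner L q q)ᵀ := by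
  have hright : corner (A * Lᵀ) p q = corner A p q * (corner L q q)ᵀ := by
    rw [← transpose_transpose (A * Lᵀ), transpose_mul, transpose_transpose, corner_transpose,
      corner_mul_of_isLowerTriangular hL, transpose_mul, ← corner_transpose, transpose_transpose]
  rw [Matrix.mul_assoc, corner_mul_of_isLowerTriangular hL, hright, Matrix.mul_assoc]

theorem LowerCongr.rank_corner {A B : Matrix (Fin m) (Fin m) K} (h : LowerCongr A B) (p q : ℕ) :
    (corner B p q).rank = (corner A p q).rank := by
  obtain ⟨L, hL, hl, rfl⟩ := h
  have hdet : ∀ r, (corner L r r).det ≠ 0 := fun r => by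
    rw [det_of_isLowerTriangular (corner L r r) hl.submatrix, Finset.prod_ne_zero_iff]
    exact fun i _ => diag_ne_zero_of_isLowerTriangular hl hL i
  rw [corner_mul_mul_transpose hl,
    rank_mul_eq_left_of_det_ne_zero _ _ (by rw [det_transpose]; exact hdet q),
    rank_mul_eq_right_of_det_ne_zero _ _ (hdet p)]

end Corner

theorem rank_self_mul_transpose_of_mul_self {K : Type*} [Field K] {α β : Type*} [Fintype α]
    [Fintype β] {T : Matrix α β K} (h : T * Tᵀ * T = T) : (T * Tᵀ).rank = T.rank :=
  le_antisymm (rank_mul_le_left _ _) <| by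
    conv_lhs => rw [← h]
    exact rank_mul_le_left _ _

section PairCount

variable {m : ℕ}

def pairCount (ι : Perm (Fin m)) (p q : ℕ) : ℕ :=
  (Finset.univ.filter fun k : Fin m => (k : ℕ) < p ∧ (ι k : ℕ) < q ∧ ι k ≠ k).card

theorem pairCount_succ (ι : Perm (Fin m)) (i : Fin m) (q : ℕ) :
    pairCount ι (i + 1) q =
      pairCount ι i q + if (ι i : ℕ) < q ∧ ι i ≠ i then 1 else 0 := by
  simp only [pairCount, Finset.card_filter]
  rw [← Fintype.sum_ite_eq' i (fun k => if (ι k : ℕ) < q ∧ ι k ≠ k then 1 else 0),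
    ← Finset.sum_add_distrib]
  refine Finset.sum_congr rfl fun k _ => ?_
  have : (k : ℕ) < i + 1 ↔ (k : ℕ) < i ∨ k = i := by rw [Fin.ext_iff]; omega
  by_cases hki : k = i
  · subst hki; simp
  · simp [this, hki]

theorem eq_of_pairCount_eq {ι ι' : Perm (Fin m)}
    (h : ∀ p q, pairCount ι p q = pairCount ι' p q) : ι = ι' := by
  have key : ∀ (i : Fin m) (q : ℕ), (ι i : ℕ) < q ∧ ι i ≠ i ↔ (ι' i : ℕ) < q ∧ ι' i ≠ i := by
    intro i q
    have := h (i + 1) q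
    rw [pairCount_succ, pairCount_succ, h i q] at this
    split_ifs at this <;> omega
  ext i
  by_cases hi : ι i = i
  · have : ι' i = i := by by_contra h'; simpa [hi] using (key i m).mpr ⟨(ι' i).isLt, h'⟩
    rw [hi, this]
  · have h' : ι' i ≠ i := ((key i m).mp ⟨(ι i).isLt, hi⟩).2
    have h1 := (key i (ι i + 1)).mp ⟨by omega, hi⟩
    have h2 := (key i (ι' i + 1)).mpr ⟨by omega, h'⟩
    omega

end PairCount

section PairingCorner

variable {K : Type*} [Field K] {m : ℕ} (ι : Perm (Fin m)) (p q : ℕ)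

theorem corner_pairingMatrix_mul_transpose :
    corner (pairingMatrix K ι) p q * (corner (pairingMatrix K ι) p q)ᵀ =
      diagonal fun i : {i : Fin m // (i : ℕ) < p} =>
        if (ι i : ℕ) < q ∧ ι i ≠ i then (1 : K) else 0 := by
  have hT : ∀ i j, corner (pairingMatrix K ι) p q i j =
      if ι i = j then pairingMatrix K ι i (ι i) else 0 :=
    fun i j => pairingMatrix_apply_eq_ite _ _
  ext i i'
  simp only [mul_apply, transpose_apply, hT, ite_mul, zero_mul, mul_ite, mul_zero, diagonal_apply]
  by_cases hii : i = i'
  · subst hii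
    by_cases hq : (ι i : ℕ) < q
    · rw [Finset.sum_eq_single ⟨ι i, hq⟩
        (fun j _ hj => if_neg fun h => hj (Subtype.ext h.symm)) (by simp)]
      simp [hq, pairingMatrix_apply_mul_self]
    · rw [Finset.sum_eq_zero fun j _ => if_neg fun h => hq (by rw [h]; exact j.2)]
      simp [hq]
  · rw [if_neg hii]
    refine Finset.sum_eq_zero fun j _ => ?_
    split_ifs with h' h
    · exact absurd (Subtype.ext (ι.injective (h.trans h'.symm))) hii
    all_goals rfl

theorem diagonal_mul_corner_pairingMatrix :
    (diagonal fun i : {i : Fin m // (i : ℕ) < p} =>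
        if (ι i : ℕ) < q ∧ ι i ≠ i then (1 : K) else 0) * corner (pairingMatrix K ι) p q =
      corner (pairingMatrix K ι) p q := by
  ext i j
  rw [diagonal_mul]
  by_cases hfix : ι i = i
  · simp [corner, pairingMatrix_apply_of_fixed_left hfix]
  by_cases h : ι i = j
  · simp [hfix, show (ι i : ℕ) < q by rw [h]; exact j.2]
  · simp [corner, pairingMatrix_apply_of_ne h]

theorem rank_corner_pairingMatrix : (corner (pairingMatrix K ι) p q).rank = pairCount ι p q := by
  classical
  -- The corner `T` satisfies `T Tᵀ T = T`, and `T Tᵀ` is the `0/1` diagonal matrix of its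
  -- nonzero rows.
  rw [← rank_self_mul_transpose_of_mul_self (by rw [corner_pairingMatrix_mul_transpose,
      diagonal_mul_corner_pairingMatrix]), corner_pairingMatrix_mul_transpose, rank_diagonal]
  calc Fintype.card {i : {i : Fin m // (i : ℕ) < p} //
        (if (ι i : ℕ) < q ∧ ι i ≠ i then (1 : K) else 0) ≠ 0}
      = Fintype.card {k : Fin m // (k : ℕ) < p ∧ ((ι k : ℕ) < q ∧ ι k ≠ k)} :=
        Fintype.card_congr ((Equiv.subtypeEquivRight (by simp)).trans
          (Equiv.subtypeSubtypeEquivSubtypeInter _ _))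
    _ = pairCount ι p q := by rw [Fintype.card_subtype]; rfl

end PairingCorner

theorem eq_of_lowerCongr_pairingMatrix {K : Type*} [Field K] {m : ℕ} {ι ι' : Perm (Fin m)}
    (h : LowerCongr (pairingMatrix K ι) (pairingMatrix K ι')) : ι = ι' :=
  eq_of_pairCount_eq fun p q => by
    rw [← rank_corner_pairingMatrix (K := K), ← rank_corner_pairingMatrix (K := K),
      h.rank_corner]

section Existence

variable {K : Type*} [Field K] {m : ℕ}

structure IsPairedUpTo (B : Matrix (Fin m) (Fin m) K) (ι : Perm (Fin m)) (p : ℕ) : Prop where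
  involutive : Involutive ι
  fixed_of_le : ∀ k : Fin m, p ≤ k → ι k = k
  apply_eq : ∀ i j : Fin m, (i : ℕ) < p → (j : ℕ) < p → B i j = pairingMatrix K ι i j

namespace IsPairedUpTo

variable {B : Matrix (Fin m) (Fin m) K} {ι : Perm (Fin m)} {p : ℕ}

theorem zero (B : Matrix (Fin m) (Fin m) K) : IsPairedUpTo B 1 0 :=
  ⟨fun _ => rfl, fun _ _ => rfl, fun _ _ h => absurd h (Nat.not_lt_zero _)⟩

theorem apply_lt (h : IsPairedUpTo B ι p) {i : Fin m} (hi : (i : ℕ) < p) : (ι i : ℕ) < p := by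
  by_contra hle
  have := h.fixed_of_le _ (not_lt.mp hle)
  rw [h.involutive i] at this
  exact hle (this ▸ hi)

theorem exists_scale_col (h : IsPairedUpTo B ι p) {c : Fin m} (hc : (c : ℕ) = p) {x : K}
    (hx : x ≠ 0) :
    ∃ B', LowerCongr B B' ∧ IsPairedUpTo B' ι p ∧
      ∀ j : Fin m, (j : ℕ) < p → B' j c = B j c * x := by
  have hd : ∀ a, (if a = c then x else 1) ≠ 0 := fun a => by
    split_ifs <;> simp [hx]
  refine ⟨_, lowerCongr_diagonal hd B, ⟨h.involutive, h.fixed_of_le, fun a b ha hb => ?_⟩,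
    fun j hj => ?_⟩
  · have hac : a ≠ c := Fin.ne_of_val_ne (by omega)
    have hbc : b ≠ c := Fin.ne_of_val_ne (by omega)
    simp [hac, hbc, h.apply_eq a b ha hb]
  · have hjc : j ≠ c := Fin.ne_of_val_ne (by omega)
    simp [hjc]

theorem mulVec_apply (h : IsPairedUpTo B ι p) {w : Fin m → K}
    (hw : ∀ k : Fin m, p ≤ k → w k = 0) {j : Fin m} (hj : (j : ℕ) < p) :
    (B *ᵥ w) j = pairingMatrix K ι j (ι j) * w (ι j) := by
  rw [mulVec, dotProduct, Finset.sum_eq_single (ι j)]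
  · rw [h.apply_eq j (ι j) hj (h.apply_lt hj)]
  · intro k _ hk
    by_cases hkp : (k : ℕ) < p
    · rw [h.apply_eq j k hj hkp, pairingMatrix_apply_of_ne (Ne.symm hk), zero_mul]
    · rw [hw k (not_lt.mp hkp), mul_zero]
  · simp

variable [NeZero (2 : K)]

theorem exists_clear_paired (hB : Bᵀ = -B) (h : IsPairedUpTo B ι p) (c : Fin m)
    (hc : (c : ℕ) = p) :
    ∃ B', LowerCongr B B' ∧ IsPairedUpTo B' ι p ∧
      ∀ j : Fin m, (j : ℕ) < p → B' j c ≠ 0 → ι j = j := by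
  -- Column `k` of the corner is `± e_{ι k}`, so adding `v k` times column `k` to column `c` (and
  -- row `k` to row `c`) cancels the entry `B (ι k) c`.
  set v : Fin m → K := fun k => -(B (ι k) c * pairingMatrix K ι (ι k) k)
  have hv : ∀ k : Fin m, p ≤ k → v k = 0 := fun k hk => by
    simp [v, h.fixed_of_le k hk, pairingMatrix_apply_of_fixed_left (h.fixed_of_le k hk)]
  have hBv : ∀ j : Fin m, (j : ℕ) < p → (B *ᵥ v) j = if ι j = j then 0 else -B j c :=
    fun j hj => by
      rw [h.mulVec_apply hv hj]
      simp only [v, h.involutive j]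
      rw [show ∀ x y : K, x * -(y * x) = -y * (x * x) by intros; ring,
        pairingMatrix_apply_mul_self]
      split_ifs <;> simp
  refine ⟨_, lowerCongr_add_vecMulVec hB (u := Pi.single c 1) (v := v) fun a b ha hb => ?_,
    ⟨h.involutive, h.fixed_of_le, fun i j hi hj => ?_⟩, fun j hj hne => ?_⟩
  · have hac : a = c := by
      by_contra hac
      simp [hac] at ha
    have hbp : (b : ℕ) < p := by
      by_contra hbp
      exact hb (hv b (not_lt.mp hbp))
    rw [hac, Fin.lt_def]
    omega
  · have hic : i ≠ c := Fin.ne_of_val_ne (by omega)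
    have hjc : j ≠ c := Fin.ne_of_val_ne (by omega)
    simp [vecMulVec_apply, hic, hjc, h.apply_eq i j hi hj]
  · by_contra hfix
    have hjc : j ≠ c := Fin.ne_of_val_ne (by omega)
    simp [vecMulVec_apply, hjc, hBv j hj, hfix] at hne

theorem succ_of_col_eq_zero (hB : Bᵀ = -B) (h : IsPairedUpTo B ι p) {c : Fin m}
    (hc : (c : ℕ) = p) (hcol : ∀ j : Fin m, (j : ℕ) < p → B j c = 0) :
    IsPairedUpTo B ι (p + 1) := by
  have hιc : ι c = c := h.fixed_of_le c hc.ge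
  have hBc : ∀ j : Fin m, (j : ℕ) < p + 1 → B j c = 0 ∧ B c j = 0 := fun j hj => by
    rcases Nat.lt_succ_iff_lt_or_eq.mp hj with hj | hj
    · have := hcol j hj
      exact ⟨this, by rw [apply_eq_neg_of_transpose_eq_neg hB, this, neg_zero]⟩
    · rw [Fin.ext (hj.trans hc.symm), diag_eq_zero_of_transpose_eq_neg hB]
      exact ⟨rfl, rfl⟩
  refine ⟨h.involutive, fun k hk => h.fixed_of_le k (by omega), fun i j hi hj => ?_⟩
  by_cases hip : (i : ℕ) < p
  · by_cases hjp : (j : ℕ) < p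
    · exact h.apply_eq i j hip hjp
    · rw [Fin.ext (show (j : ℕ) = c by omega), (hBc i hi).1,
        pairingMatrix_apply_of_fixed_right hιc]
  · rw [Fin.ext (show (i : ℕ) = c by omega), (hBc j hj).2,
      pairingMatrix_apply_of_fixed_left hιc]

theorem exists_clear_unpaired (hB : Bᵀ = -B) (h : IsPairedUpTo B ι p) {c : Fin m}
    (hc : (c : ℕ) = p) {j₀ : Fin m} (hj₀ : (j₀ : ℕ) < p) (hfix : ι j₀ = j₀)
    (hmin : ∀ j, j < j₀ → B j c = 0) (hne : B j₀ c ≠ 0) :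
    ∃ B', LowerCongr B B' ∧ IsPairedUpTo B' ι p ∧
      ∀ j : Fin m, (j : ℕ) < p → B' j c = if j = j₀ then B j₀ c else 0 := by
  -- Row `j₀` vanishes on the corner since `j₀` is fixed, so adding multiples of it to the
  -- later rows only changes column `c`.
  set u : Fin m → K := fun a => if j₀ < a ∧ (a : ℕ) < p then -(B a c / B j₀ c) else 0
  refine ⟨_, lowerCongr_add_vecMulVec hB (u := u) (v := Pi.single j₀ 1) fun a b ha hb => ?_,
    ⟨h.involutive, h.fixed_of_le, fun a b ha hb => ?_⟩, fun j hj => ?_⟩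
  · have hb' : b = j₀ := by
      by_contra hb'
      exact hb (by simp [hb'])
    by_contra hba
    exact ha (if_neg fun h' => hba (hb' ▸ h'.1))
  · simp only [Matrix.add_apply, vecMulVec_apply, single_one_vecMul, mulVec_single_one, row_apply,
      col_apply, h.apply_eq j₀ b hj₀ hb, h.apply_eq a j₀ ha hj₀, h.apply_eq a b ha hb,
      pairingMatrix_apply_of_fixed_left hfix, pairingMatrix_apply_of_fixed_right hfix]
    ring
  · have huc : u c = 0 := if_neg (by omega)
    simp only [Matrix.add_apply, vecMulVec_apply, single_one_vecMul, mulVec_single_one, row_apply,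
      col_apply, huc, mul_zero, add_zero]
    rcases lt_trichotomy j j₀ with hlt | rfl | hgt
    · have huj : u j = 0 := if_neg fun h' => absurd h'.1 (not_lt_of_gt hlt)
      rw [hmin j hlt, if_neg hlt.ne, huj, zero_mul, add_zero]
    · simp [u]
    · rw [show u j = _ from if_pos ⟨hgt, hj⟩, if_neg hgt.ne']
      field_simp
      ring

theorem succ_of_col_eq_single (hB : Bᵀ = -B) (h : IsPairedUpTo B ι p) {c : Fin m}
    (hc : (c : ℕ) = p) {j₀ : Fin m} (hj₀ : (j₀ : ℕ) < p) (hfix : ι j₀ = j₀)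
    (hcol : ∀ j : Fin m, (j : ℕ) < p → B j c = if j = j₀ then 1 else 0) :
    IsPairedUpTo B (swap j₀ c * ι) (p + 1) := by
  have hιc : ι c = c := h.fixed_of_le c hc.ge
  have hj₀c : j₀ < c := Fin.lt_def.mpr (by omega)
  have hlt : ∀ k : Fin m, (k : ℕ) < p + 1 → (k : ℕ) < p ∨ k = c := fun k hk => by
    rcases Nat.lt_succ_iff_lt_or_eq.mp hk with hk | hk
    · exact Or.inl hk
    · exact Or.inr (Fin.ext (hk.trans hc.symm))
  refine ⟨involutive_swap_mul h.involutive hfix hιc, fun k hk => ?_, fun i j hi hj => ?_⟩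
  · rw [swap_mul_apply_of_ne hfix hιc (Fin.ne_of_val_ne (by omega)) (Fin.ne_of_val_ne (by omega)),
      h.fixed_of_le k (by omega)]
  rw [pairingMatrix_swap_mul hfix hιc hj₀c, Matrix.add_apply, Matrix.sub_apply, single_apply,
    single_apply]
  rcases hlt i hi with hip | rfl <;> rcases hlt j hj with hjp | rfl
  · have hic : i ≠ c := Fin.ne_of_val_ne (by omega)
    have hjc : j ≠ c := Fin.ne_of_val_ne (by omega)
    simp [h.apply_eq i j hip hjp, hic.symm, hjc.symm]
  · simp [hcol i hip, pairingMatrix_apply_of_fixed_right hιc, hj₀c.ne', eq_comm (a := j₀)]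
  · rw [apply_eq_neg_of_transpose_eq_neg hB, hcol j hjp, pairingMatrix_apply_of_fixed_left hιc]
    simp [hj₀c.ne', eq_comm (a := j₀)]
  · simp [diag_eq_zero_of_transpose_eq_neg hB, pairingMatrix_apply_of_fixed_left hιc]

theorem exists_succ (hB : Bᵀ = -B) (h : IsPairedUpTo B ι p) (hp : p < m) :
    ∃ B' ι', LowerCongr B B' ∧ IsPairedUpTo B' ι' (p + 1) := by
  set c : Fin m := ⟨p, hp⟩
  obtain ⟨B₁, h₁, hpaired₁, hunpaired₁⟩ := h.exists_clear_paired hB c rfl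
  have hB₁ := h₁.transpose_eq_neg hB
  by_cases hzero : ∀ j : Fin m, (j : ℕ) < p → B₁ j c = 0
  · exact ⟨B₁, ι, h₁, hpaired₁.succ_of_col_eq_zero hB₁ rfl hzero⟩
  push Not at hzero
  obtain ⟨j₀, ⟨hj₀, hne⟩, hmin⟩ :=
    wellFounded_lt.has_min {j : Fin m | (j : ℕ) < p ∧ B₁ j c ≠ 0} hzero
  have hfix := hunpaired₁ j₀ hj₀ hne
  have hbefore : ∀ j, j < j₀ → B₁ j c = 0 := fun j hj => by
    by_contra hj'
    exact hmin j ⟨by rw [Fin.lt_def] at hj; omega, hj'⟩ hj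
  obtain ⟨B₂, h₂, hpaired₂, hcol₂⟩ :=
    hpaired₁.exists_clear_unpaired hB₁ rfl hj₀ hfix hbefore hne
  obtain ⟨B₃, h₃, hpaired₃, hcol₃⟩ := hpaired₂.exists_scale_col (c := c) rfl (inv_ne_zero hne)
  have hone : ∀ j : Fin m, (j : ℕ) < p → B₃ j c = if j = j₀ then 1 else 0 := fun j hj => by
    rw [hcol₃ j hj, hcol₂ j hj]
    split_ifs <;> simp [hne]
  exact ⟨B₃, _, h₁.trans (h₂.trans h₃),
    hpaired₃.succ_of_col_eq_single ((h₂.trans h₃).transpose_eq_neg hB₁) rfl hj₀ hfix hone⟩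

end IsPairedUpTo

theorem exists_isPairedUpTo [NeZero (2 : K)] {B : Matrix (Fin m) (Fin m) K} (hB : Bᵀ = -B) :
    ∀ p ≤ m, ∃ B' ι, LowerCongr B B' ∧ IsPairedUpTo B' ι p
  | 0, _ => ⟨B, 1, LowerCongr.refl B, IsPairedUpTo.zero B⟩
  | p + 1, hp => by
    obtain ⟨B', ι, h, hpaired⟩ := exists_isPairedUpTo hB p (by omega)
    obtain ⟨B'', ι', h', hpaired'⟩ := hpaired.exists_succ (h.transpose_eq_neg hB) hp
    exact ⟨B'', ι', h.trans h', hpaired'⟩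

theorem exists_lowerCongr_pairingMatrix [NeZero (2 : K)] {B : Matrix (Fin m) (Fin m) K}
    (hB : Bᵀ = -B) :
    ∃ ι : Perm (Fin m), Involutive ι ∧ LowerCongr (pairingMatrix K ι) B := by
  obtain ⟨B', ι, h, hpaired⟩ := exists_isPairedUpTo hB m le_rfl
  have hB' : B' = pairingMatrix K ι := ext fun i j => hpaired.apply_eq i j i.2 j.2
  exact ⟨ι, hpaired.involutive, hB' ▸ h.symm⟩

end Existence

theorem apply_ne_self_of_isUnit_pairingMatrix {K : Type*} [Field K] {m : ℕ} {ι : Perm (Fin m)}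
    (hι : IsUnit (pairingMatrix K ι)) (i : Fin m) : ι i ≠ i := fun hi => by
  rw [isUnit_iff_isUnit_det, det_eq_zero_of_row_eq_zero i (pairingMatrix_apply_of_fixed_left hi)]
    at hι
  exact not_isUnit_zero hι

/-- every invertible antisymmetric matrix is `B₋`-congruent to `S_ι`
for a unique fixed-point-free involution `ι`. -/
theorem congruence_orbit_classification {n : ℕ}
    (A : Matrix (Fin (2*n)) (Fin (2*n)) ℂ) (hA : IsUnit A) (hanti : Aᵀ = -A) :
    ∃ ι : Equiv.Perm (Fin (2*n)), isFPF ι ∧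
      (∃ b : Matrix (Fin (2*n)) (Fin (2*n)) ℂ, IsUnit b ∧
        (∀ i j : Fin (2*n), i < j → b i j = 0) ∧ A = b * Smat ι * bᵀ) ∧
      (∀ ι' : Equiv.Perm (Fin (2*n)), isFPF ι' →
        (∃ b : Matrix (Fin (2*n)) (Fin (2*n)) ℂ, IsUnit b ∧
          (∀ i j : Fin (2*n), i < j → b i j = 0) ∧ A = b * Smat ι' * bᵀ) →
        ι' = ι) := by
  obtain ⟨ι, hinv, hA'⟩ := exists_lowerCongr_pairingMatrix hanti
  have hfree : ∀ i, ι i ≠ i := apply_ne_self_of_isUnit_pairingMatrix (hA'.symm.isUnit hA)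
  refine ⟨ι, ⟨Equiv.ext hinv, hfree⟩, ?_, ?_⟩
  · obtain ⟨b, hb, hbl, hAb⟩ := hA'
    exact ⟨b, hb, fun i j hij => hbl hij, by rwa [Smat_eq_pairingMatrix hfree]⟩
  · rintro ι' ⟨-, hfree'⟩ ⟨b, hb, hbl, hAb⟩
    have hA'' : LowerCongr (pairingMatrix ℂ ι') A :=
      ⟨b, hb, fun i j hij => hbl i j hij, by rwa [← Smat_eq_pairingMatrix hfree']⟩
    exact eq_of_lowerCongr_pairingMatrix (hA''.trans hA'.symm)
end
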